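/- arXiv:2109.03678 — 12 statements merged into one kernel-verified Lean document; each statement's English description precedes it below -/
import Mathlib

section
/- Let A be an m×n matrix with nonnegative entries that is normalized, i.e., max_{i∈[m]} A_{ij} = 1 for every column j ∈ [n]. If x* is a maximizer of f(x) = Σ_{i=1}^n log x_i over the feasible region P = {x ∈ ℝ_{≥0}^n : Ax ≤ 1_m}, then x*_i ≥ 1/n for every i ∈ [n]. -/
/-!
At a maximizer `x*` of `∑ log xⱼ` over a convex set, the directional derivative towards any
feasible `y`, namely `∑ (yⱼ - x*ⱼ) / x*ⱼ = ∑ yⱼ / x*ⱼ - n`, is nonpositive. Normalization makes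
every unit vector `eₖ` feasible, and for `y = eₖ` this reads `1 / x*ₖ ≤ n`.
-/

section SumLog

variable {ι : Type*} [Fintype ι]

theorem hasFDerivAt_sum_log {x : ι → ℝ} (hx : ∀ j, x j ≠ 0) :
    HasFDerivAt (fun y : ι → ℝ => ∑ j, Real.log (y j))
      (∑ j, (x j)⁻¹ • ContinuousLinearMap.proj (R := ℝ) (φ := fun _ : ι => ℝ) j) x :=
  HasFDerivAt.fun_sum fun j _ => (hasFDerivAt_apply j x).log (hx j)

theorem sum_div_le_card_of_isMaxOn_sum_log {s : Set (ι → ℝ)} {x y : ι → ℝ}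
    (hx : ∀ j, 0 < x j) (hmax : IsMaxOn (fun z : ι → ℝ => ∑ j, Real.log (z j)) s x)
    (hseg : openSegment ℝ x y ⊆ s) :
    ∑ j, y j / x j ≤ Fintype.card ι := by
  have hderiv_nonpos := hmax.localize.hasFDerivWithinAt_nonpos
    (hasFDerivAt_sum_log fun j => (hx j).ne').hasFDerivWithinAt
    (sub_mem_posTangentConeAt_of_openSegment_subset hseg)
  have hderiv : (∑ j, (x j)⁻¹ • ContinuousLinearMap.proj (R := ℝ) (φ := fun _ : ι => ℝ) j)
      (y - x) = ∑ j, y j / x j - Fintype.card ι := by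
    simp [Finset.sum_sub_distrib, mul_sub, inv_mul_cancel₀ (hx _).ne', div_eq_inv_mul]
  linarith

end SumLog

section Packing

variable {m n : Type*} [Fintype n]

/-- The part of the packing polytope `{x ≥ 0 : A x ≤ 1}` on which `∑ log xⱼ` is finite. -/
def positivePackingRegion (A : Matrix m n ℝ) : Set (n → ℝ) :=
  {x | (∀ j, 0 < x j) ∧ ∀ i, A.mulVec x i ≤ 1}

theorem openSegment_subset_positivePackingRegion {A : Matrix m n ℝ} {x y : n → ℝ}
    (hx : x ∈ positivePackingRegion A) (hy_nonneg : 0 ≤ y)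
    (hy_feas : ∀ i, A.mulVec y i ≤ 1) :
    openSegment ℝ x y ⊆ positivePackingRegion A := by
  rintro _ ⟨a, b, ha, hb, hab, rfl⟩
  refine ⟨fun j => ?_, fun i => ?_⟩
  · simpa using add_pos_of_pos_of_nonneg (mul_pos ha (hx.1 j)) (mul_nonneg hb.le (hy_nonneg j))
  · rw [Matrix.mulVec_add, Matrix.mulVec_smul, Matrix.mulVec_smul]
    simp only [Pi.add_apply, Pi.smul_apply, smul_eq_mul]
    nlinarith [hx.2 i, hy_feas i]

end Packing

theorem lower_bound_on_coordinates_of_maximizer_general {m n : ℕ}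
    (A : Matrix (Fin m) (Fin n) ℝ)
    (hnorm : ∀ j, (∀ i, A i j ≤ 1) ∧ ∃ i, A i j = 1)
    (xs : Fin n → ℝ)
    (hxs_pos : ∀ j, 0 < xs j)
    (hxs_feas : ∀ i, A.mulVec xs i ≤ 1)
    (hmax : ∀ x : Fin n → ℝ, (∀ j, 0 < x j) → (∀ i, A.mulVec x i ≤ 1) →
      ∑ j, Real.log (x j) ≤ ∑ j, Real.log (xs j)) :
    ∀ j, 1 / (n : ℝ) ≤ xs j := by
  intro k
  have hunit_feas : ∀ i, A.mulVec (Pi.single k 1) i ≤ 1 := by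
    simpa [Matrix.mulVec_single_one] using fun i => (hnorm k).1 i
  have hopt := sum_div_le_card_of_isMaxOn_sum_log hxs_pos (fun x hx => hmax x hx.1 hx.2)
    (openSegment_subset_positivePackingRegion ⟨hxs_pos, hxs_feas⟩
      (Pi.single_nonneg.2 zero_le_one) hunit_feas)
  have hsum : ∑ j, (Pi.single k 1 : Fin n → ℝ) j / xs j = 1 / xs k := by
    simp [Pi.single_apply, ite_div]
  rw [hsum, Fintype.card_fin] at hopt
  exact (one_div_le (hxs_pos k) (Nat.cast_pos.2 k.pos)).1 hopt

/-- If `A` is a normalized nonnegative matrix and `x*` maximizes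
`f(x) = ∑ log xᵢ` over the feasible region `{x > 0 : A x ≤ 1}`, then every
coordinate of `x*` is at least `1/n`. -/
theorem lower_bound_on_coordinates_of_maximizer {m n : ℕ}
    (A : Matrix (Fin m) (Fin n) ℝ)
    (hA : ∀ i j, 0 ≤ A i j)
    (hnorm : ∀ j, (∀ i, A i j ≤ 1) ∧ ∃ i, A i j = 1)
    (xs : Fin n → ℝ)
    (hxs_pos : ∀ j, 0 < xs j)
    (hxs_feas : ∀ i, A.mulVec xs i ≤ 1)
    (hmax : ∀ x : Fin n → ℝ, (∀ j, 0 < x j) → (∀ i, A.mulVec x i ≤ 1) →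
      ∑ j, Real.log (x j) ≤ ∑ j, Real.log (xs j)) :
    ∀ j, 1 / (n : ℝ) ≤ xs j :=
  lower_bound_on_coordinates_of_maximizer_general A hnorm xs hxs_pos hxs_feas hmax
end

section
/- Let ε ∈ (0, n/2], let A be a normalized nonnegative m×n matrix, set β = ε/(6n log(2mn²/ε)), ω = log(mn/(1−ε/n)), and B = [−ω, 0]^n. Let x_r* be a minimizer of f_r over B and let x_r^ε ∈ B satisfy f_r(x_r^ε) − f_r(x_r*) ≤ ε. Then the point ū = exp(x_r^ε)/(1+ε/n) is feasible, i.e., Aū ≤ 1_m, and satisfies f(x*) − f(ū) ≤ 5ε, where x* is the maximizer of f over P. -/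
open scoped BigOperators

/-- The regularized objective `f_r` for the 1-fair packing problem. -/
noncomputable def fr {m n : ℕ} (A : Matrix (Fin m) (Fin n) ℝ) (β : ℝ)
    (x : Fin n → ℝ) : ℝ :=
  -(∑ j, x j) + (β / (1 + β)) *
    ∑ i, (A.mulVec (fun j => Real.exp (x j)) i) ^ ((1 + β) / β)

/-!
Compare `x_r^ε` with `x̂ = log ((1 - ε/n) x*)`. Optimality of `x*` forces `1/n ≤ x*ⱼ ≤ 1`, so
`x̂` lies in the box, and since `A exp x̂ ≤ 1 - ε/n` its penalty is at most
`m (1 - ε/n)^{1/β} ≤ m exp (-6 log (2mn²/ε)) ≤ ε`; hence `f_r(x_r^ε) ≤ -f(x*) + 4ε`.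
If some `(A exp x_r^ε)ᵢ` exceeded `1 + ε/n`, the penalty alone would be at least
`β/(1+β) (1 + ε/n)^{1/β} ≥ β/2 · (2mn²/ε)⁴`, which beats `n log n + 4ε ≥ -f(x*) + 4ε`.
So dividing by `1 + ε/n` gives a feasible point, losing only `n log (1 + ε/n) ≤ ε`,
and `-∑ x_r^ε ≤ f_r(x_r^ε)` finishes.
-/

open Finset Matrix

lemma sum_log_const_mul {ι : Type*} [Fintype ι] {c : ℝ} (hc : 0 < c) {x : ι → ℝ}
    (hx : ∀ k, 0 < x k) :
    ∑ k, Real.log (c * x k) = Fintype.card ι * Real.log c + ∑ k, Real.log (x k) := by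
  simp only [Real.log_mul hc.ne' (hx _).ne', sum_add_distrib, sum_const, card_univ,
    nsmul_eq_mul]

lemma sum_log_exp_div {ι : Type*} [Fintype ι] {c : ℝ} (hc : 0 < c) (x : ι → ℝ) :
    ∑ k, Real.log (Real.exp (x k) / c) = ∑ k, x k - Fintype.card ι * Real.log c := by
  simp only [Real.log_div (Real.exp_pos _).ne' hc.ne', Real.log_exp, sum_sub_distrib, sum_const,
    card_univ, nsmul_eq_mul]

lemma natCast_mul_log_one_add_div_le (n : ℕ) {ε : ℝ} (hε : 0 ≤ ε) :
    n * Real.log (1 + ε / n) ≤ ε := by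
  rcases Nat.eq_zero_or_pos n with rfl | hn
  · simpa using hε
  have h := Real.log_le_sub_one_of_pos (show 0 < 1 + ε / n by positivity)
  calc n * Real.log (1 + ε / n) ≤ n * (ε / n) := by gcongr; linarith
    _ = ε := mul_div_cancel₀ _ (by positivity)

lemma one_sub_mul_lt_mul_one_sub_pow {a δ : ℝ} (n : ℕ) (ha : 0 ≤ a) (hδ0 : 0 < δ)
    (hδ1 : δ ≤ 1) (h : n * ((1 - δ) * a + δ) < 1) :
    (1 - δ) * a < ((1 - δ) * a + δ) * (1 - δ) ^ n := by
  have hbernoulli : 1 - n * δ ≤ (1 - δ) ^ n := by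
    simpa [← sub_eq_add_neg] using one_add_mul_le_pow (show (-2 : ℝ) ≤ -δ by linarith) n
  have hpos : 0 < (1 - δ) * a + δ := by nlinarith
  nlinarith [mul_le_mul_of_nonneg_left hbernoulli hpos.le, mul_pos hδ0 (sub_pos.2 h)]

lemma neg_two_mul_le_log_one_sub {t : ℝ} (ht0 : 0 ≤ t) (ht : t ≤ 1 / 2) :
    -(2 * t) ≤ Real.log (1 - t) := by
  have h := Real.one_sub_inv_le_log_of_pos (show 0 < 1 - t by linarith)
  have : (1 - t)⁻¹ ≤ 1 + 2 * t := by
    rw [inv_eq_one_div, div_le_iff₀ (by linarith)]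
    nlinarith
  linarith

lemma two_thirds_mul_le_log_one_add {t : ℝ} (ht0 : 0 ≤ t) (ht : t ≤ 1 / 2) :
    2 / 3 * t ≤ Real.log (1 + t) := by
  have h := Real.one_sub_inv_le_log_of_pos (show 0 < 1 + t by linarith)
  have : (1 + t)⁻¹ ≤ 1 - 2 / 3 * t := by
    rw [inv_eq_one_div, div_le_iff₀ (by linarith)]
    nlinarith
  linarith

lemma one_sub_rpow_le_exp {t r : ℝ} (ht : t ≤ 1) (hr : 0 ≤ r) :
    (1 - t) ^ r ≤ Real.exp (-(t * r)) := by
  rw [← neg_mul, Real.exp_mul]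
  exact Real.rpow_le_rpow (by linarith) (Real.one_sub_le_exp_neg t) hr

lemma exp_le_one_add_rpow {t r : ℝ} (ht0 : 0 ≤ t) (ht : t ≤ 1 / 2) (hr : 0 ≤ r) :
    Real.exp (2 / 3 * t * r) ≤ (1 + t) ^ r := by
  rw [Real.exp_mul]
  refine Real.rpow_le_rpow (Real.exp_pos _).le ?_ hr
  rw [← Real.le_log_iff_exp_le (by linarith)]
  exact two_thirds_mul_le_log_one_add ht0 ht

lemma exp_nat_mul_log {X : ℝ} (hX : 0 < X) (k : ℕ) : Real.exp (k * Real.log X) = X ^ k := by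
  rw [Real.exp_nat_mul, Real.exp_log hX]

section Packing

variable {ι κ : Type*} [Fintype ι] {A : Matrix κ ι ℝ}

lemma mulVec_div_le_one {v : ι → ℝ} {c : ℝ} (hc : 0 < c) {i : κ}
    (h : (A *ᵥ v) i ≤ c) : (A *ᵥ fun j => v j / c) i ≤ 1 := by
  have hv : (fun j => v j / c) = c⁻¹ • v := by ext j; simp [div_eq_inv_mul]
  rwa [hv, Matrix.mulVec_smul, Pi.smul_apply, smul_eq_mul, inv_mul_le_iff₀ hc, mul_one]

lemma le_one_of_mulVec_le_one (hA : ∀ i j, 0 ≤ A i j) {x : ι → ℝ} (hx : ∀ j, 0 ≤ x j)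
    {i : κ} (hAx : (A *ᵥ x) i ≤ 1) {j : ι} (hij : A i j = 1) : x j ≤ 1 :=
  calc x j = A i j * x j := by rw [hij, one_mul]
    _ ≤ ∑ k, A i k * x k :=
      single_le_sum (fun k _ => mul_nonneg (hA i k) (hx k)) (mem_univ j)
    _ ≤ 1 := hAx

/-- Moving weight `δ = 1/N - xⱼ` towards `eⱼ` keeps `x` feasible and, if `xⱼ < 1/N`, strictly
increases `∑ log`. -/
lemma inv_card_le_of_forall_sum_log_le [DecidableEq ι] {j : ι}
    (hcol : ∀ i, A i j ≤ 1) {x : ι → ℝ} (hxpos : ∀ k, 0 < x k)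
    (hxfeas : ∀ i, (A *ᵥ x) i ≤ 1)
    (hmax : ∀ y : ι → ℝ, (∀ k, 0 < y k) → (∀ i, (A *ᵥ y) i ≤ 1) →
      ∑ k, Real.log (y k) ≤ ∑ k, Real.log (x k)) :
    (Fintype.card ι : ℝ)⁻¹ ≤ x j := by
  by_contra! hlt
  set N : ℝ := (Fintype.card ι : ℝ)
  set a := x j
  have hN1 : 1 ≤ N := Nat.one_le_cast.2 (Fintype.card_pos_iff.2 ⟨j⟩)
  have hN : 0 < N := by linarith
  have ha : 0 < a := hxpos j
  have hNa : N * a < 1 := by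
    simpa [hN.ne'] using mul_lt_mul_of_pos_left hlt hN
  set δ := (1 - N * a) / N
  have hNδ : N * δ = 1 - N * a := mul_div_cancel₀ _ hN.ne'
  have hδ0 : 0 < δ := by positivity
  have hδ1 : δ < 1 := by rw [div_lt_one hN]; nlinarith
  set y : ι → ℝ := (1 - δ) • x + δ • Pi.single j 1
  have hy_ne : ∀ k ≠ j, y k = (1 - δ) * x k := fun k hk => by simp [y, hk]
  have hy_j : y j = (1 - δ) * a + δ := by simp [y, a]
  have hy_pos : ∀ k, 0 < y k := by
    intro k
    rcases eq_or_ne k j with rfl | hk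
    · rw [hy_j]; nlinarith [hxpos k]
    · rw [hy_ne k hk]; exact mul_pos (by linarith) (hxpos k)
  have hy_feas : ∀ i, (A *ᵥ y) i ≤ 1 := by
    intro i
    have hAy : (A *ᵥ y) i = (1 - δ) * (A *ᵥ x) i + δ * A i j := by
      simp [y, Matrix.mulVec_add, Matrix.mulVec_smul]
    nlinarith [hxfeas i, hcol i]
  have hsum : ∑ k, Real.log (y k) =
      Real.log (y j) - Real.log ((1 - δ) * a) + (N * Real.log (1 - δ) + ∑ k, Real.log (x k)) := by
    rw [← sum_log_const_mul (by linarith) hxpos, ← add_sum_erase _ _ (mem_univ j),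
      ← add_sum_erase _ (fun k => Real.log ((1 - δ) * x k)) (mem_univ j),
      sum_congr rfl fun k hk => by rw [hy_ne k (ne_of_mem_erase hk)]]
    ring
  have hlog : Real.log (((1 - δ) * a + δ) * (1 - δ) ^ Fintype.card ι) ≤ Real.log ((1 - δ) * a) := by
    rw [Real.log_mul (by rw [← hy_j]; exact (hy_pos j).ne') (by positivity), Real.log_pow, ← hy_j]
    linarith [hmax y hy_pos hy_feas]
  have hgain := one_sub_mul_lt_mul_one_sub_pow (Fintype.card ι) ha.le hδ0 hδ1.le
    (by nlinarith [mul_pos hN (mul_pos hδ0 ha)])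
  exact absurd hlog (not_le.2 (Real.log_lt_log (by nlinarith) hgain))

lemma neg_sum_log_le_of_inv_card_le {x : ι → ℝ}
    (hx : ∀ k, (Fintype.card ι : ℝ)⁻¹ ≤ x k) :
    -∑ k, Real.log (x k) ≤ Fintype.card ι * Real.log (Fintype.card ι) := by
  have hk : ∀ k, -Real.log (x k) ≤ Real.log (Fintype.card ι) := fun k => by
    have hcard : (0 : ℝ) < Fintype.card ι := Nat.cast_pos.2 (Fintype.card_pos_iff.2 ⟨k⟩)
    rw [neg_le, ← Real.log_inv]
    exact Real.log_le_log (inv_pos.2 hcard) (hx k)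
  simpa using sum_le_sum fun k (_ : k ∈ univ) => hk k

end Packing

section Parameters

variable {m n : ℕ} {ε β : ℝ}

lemma four_mul_le_two_mul_mul_sq_div (hm : 0 < m) (hε0 : 0 < ε) (hεn : ε ≤ n / 2) :
    4 * (n : ℝ) ≤ 2 * m * n ^ 2 / ε := by
  have hm1 : (1 : ℝ) ≤ m := Nat.one_le_cast.2 hm
  rw [le_div_iff₀ hε0]
  nlinarith [sq_nonneg (n : ℝ)]

lemma smoothing_pos (hm : 0 < m) (hn : 0 < n) (hε0 : 0 < ε) (hεn : ε ≤ n / 2) :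
    0 < ε / (6 * n * Real.log (2 * m * n ^ 2 / ε)) := by
  have hn1 : (1 : ℝ) ≤ n := Nat.one_le_cast.2 hn
  have := four_mul_le_two_mul_mul_sq_div hm hε0 hεn
  have : 0 < Real.log (2 * m * n ^ 2 / ε) := Real.log_pos (by linarith)
  positivity

lemma card_mul_one_sub_rpow_le (hm : 0 < m) (hn : 0 < n) (hε0 : 0 < ε) (hεn : ε ≤ n / 2)
    (hβ : β = ε / (6 * n * Real.log (2 * m * n ^ 2 / ε))) :
    m * (1 - ε / n) ^ (1 / β) ≤ ε := by
  set X := 2 * (m : ℝ) * n ^ 2 / ε with hX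
  have hn1 : (1 : ℝ) ≤ n := Nat.one_le_cast.2 hn
  have hm1 : (1 : ℝ) ≤ m := Nat.one_le_cast.2 hm
  have hX4 : 4 ≤ X := by linarith [four_mul_le_two_mul_mul_sq_div hm hε0 hεn]
  have hL : 0 < Real.log X := Real.log_pos (by linarith)
  have hβ0 : 0 < β := hβ ▸ smoothing_pos hm hn hε0 hεn
  have hrate : ε / n * (1 / β) = (6 : ℕ) * Real.log X := by
    rw [hβ]; field_simp; norm_num
  have hεX : ε * X = 2 * m * n ^ 2 := by rw [hX]; field_simp
  calc (m : ℝ) * (1 - ε / n) ^ (1 / β) ≤ m * Real.exp (-(ε / n * (1 / β))) := by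
        gcongr
        exact one_sub_rpow_le_exp (by rw [div_le_one (by positivity)]; linarith) (by positivity)
    _ = m / X ^ 6 := by rw [hrate, Real.exp_neg, exp_nat_mul_log (by linarith), div_eq_mul_inv]
    _ ≤ ε := by
        rw [div_le_iff₀ (by positivity), show ε * X ^ 6 = ε * X * X ^ 5 by ring, hεX]
        have hm_le : (m : ℝ) ≤ 2 * m * n ^ 2 := by
          nlinarith [mul_le_mul_of_nonneg_left (one_le_pow₀ hn1 : (1 : ℝ) ≤ n ^ 2)
            (by positivity : (0 : ℝ) ≤ m)]
        have : 1 ≤ X ^ 5 := one_le_pow₀ (by linarith)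
        nlinarith [mul_le_mul_of_nonneg_left this (by positivity : (0 : ℝ) ≤ 2 * m * n ^ 2)]

lemma mul_log_add_lt_mul_one_add_rpow (hm : 0 < m) (hn : 0 < n) (hε0 : 0 < ε)
    (hεn : ε ≤ n / 2) (hβ : β = ε / (6 * n * Real.log (2 * m * n ^ 2 / ε))) :
    n * Real.log n + 4 * ε < β / (1 + β) * (1 + ε / n) ^ (1 / β) := by
  set X := 2 * (m : ℝ) * n ^ 2 / ε with hX
  have hn1 : (1 : ℝ) ≤ n := Nat.one_le_cast.2 hn
  have hX4n : 4 * (n : ℝ) ≤ X := four_mul_le_two_mul_mul_sq_div hm hε0 hεn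
  have hX0 : 0 < X := by nlinarith
  have hL1 : 1 / 2 ≤ Real.log X := by
    have := Real.one_sub_inv_le_log_of_pos hX0
    have : X⁻¹ ≤ 1 / 2 := by rw [inv_le_comm₀ hX0 (by norm_num)]; nlinarith
    linarith
  have hLX : Real.log X ≤ X := by linarith [Real.log_le_sub_one_of_pos hX0]
  have hβ0 : 0 < β := hβ ▸ smoothing_pos hm hn hε0 hεn
  have hβ1 : β ≤ 1 := by rw [hβ, div_le_one (by positivity)]; nlinarith
  have ht : ε / n ≤ 1 / 2 := by rw [div_le_iff₀ (by positivity)]; linarith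
  have hrate : 2 / 3 * (ε / n) * (1 / β) = (4 : ℕ) * Real.log X := by
    rw [hβ]; field_simp; norm_num
  have hpow : X ^ 4 ≤ (1 + ε / n) ^ (1 / β) := by
    rw [← exp_nat_mul_log hX0, ← hrate]
    exact exp_le_one_add_rpow (by positivity) ht (by positivity)
  have hweight : ε / (12 * n * X) ≤ β / (1 + β) :=
    calc ε / (12 * n * X) ≤ ε / (12 * n * Real.log X) := by gcongr
      _ = β / 2 := by rw [hβ]; ring
      _ ≤ β / (1 + β) := by gcongr; linarith
  have hεX : ε * X = 2 * m * n ^ 2 := by rw [hX]; field_simp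
  have hgain : n * Real.log n + 4 * ε ≤ 2 * n ^ 2 := by
    nlinarith [Real.log_le_sub_one_of_pos (show (0 : ℝ) < n by positivity)]
  have hcost : 2 * (n : ℝ) ^ 2 < ε / (12 * n * X) * X ^ 4 := by
    rw [div_mul_eq_mul_div, lt_div_iff₀ (by positivity),
      show ε * X ^ 4 = ε * X * X * X * X by ring, hεX]
    have hm1 : (1 : ℝ) ≤ m := Nat.one_le_cast.2 hm
    have hXX : 12 * (n : ℝ) < m * (X * X) := by
      nlinarith [mul_le_mul hX4n hX4n (by positivity) hX0.le,
        mul_le_mul_of_nonneg_right hm1 (mul_self_nonneg X)]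
    calc 2 * (n : ℝ) ^ 2 * (12 * n * X) = 2 * n ^ 2 * X * (12 * n) := by ring
      _ < 2 * n ^ 2 * X * (m * (X * X)) := mul_lt_mul_of_pos_left hXX (by positivity)
      _ = 2 * m * n ^ 2 * X * X * X := by ring
  calc n * Real.log n + 4 * ε < ε / (12 * n * X) * X ^ 4 := by linarith
    _ ≤ β / (1 + β) * (1 + ε / n) ^ (1 / β) := by gcongr

lemma log_one_sub_mul_mem_Icc (hm : 0 < m) (hn : 0 < n) {t a : ℝ} (ht0 : 0 ≤ t)
    (ht1 : t < 1) (ha0 : (n : ℝ)⁻¹ ≤ a) (ha1 : a ≤ 1) :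
    Real.log ((1 - t) * a) ∈ Set.Icc (-Real.log (m * n / (1 - t))) 0 := by
  have hn1 : (1 : ℝ) ≤ n := Nat.one_le_cast.2 hn
  have hm1 : (1 : ℝ) ≤ m := Nat.one_le_cast.2 hm
  have ha : 0 < a := lt_of_lt_of_le (by positivity) ha0
  refine ⟨?_, Real.log_nonpos (by nlinarith) (by nlinarith)⟩
  rw [← Real.log_inv, inv_div]
  refine Real.log_le_log (div_pos (by linarith) (by positivity)) ?_
  rw [div_eq_mul_inv]
  exact mul_le_mul_of_nonneg_left (le_trans (inv_anti₀ (by positivity) (by nlinarith)) ha0)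
    (by linarith)

end Parameters

section RegularizedObjective

variable {m n : ℕ} {A : Matrix (Fin m) (Fin n) ℝ} {ε β : ℝ}

lemma mulVec_exp_nonneg (hA : ∀ i j, 0 ≤ A i j) (x : Fin n → ℝ) (i : Fin m) :
    0 ≤ (A *ᵥ fun j => Real.exp (x j)) i :=
  dotProduct_nonneg_of_nonneg (hA i) fun _ => (Real.exp_pos _).le

lemma neg_sum_le_fr (hA : ∀ i j, 0 ≤ A i j) (hβ : 0 < β) (x : Fin n → ℝ) :
    -∑ j, x j ≤ fr A β x := by
  have hpen : 0 ≤ ∑ i, (A *ᵥ fun j => Real.exp (x j)) i ^ ((1 + β) / β) :=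
    sum_nonneg fun i _ => Real.rpow_nonneg (mulVec_exp_nonneg hA x i) _
  unfold fr
  linarith [mul_nonneg (by positivity : 0 ≤ β / (1 + β)) hpen]

lemma fr_le_of_mulVec_exp_le (hA : ∀ i j, 0 ≤ A i j) (hβ : 0 < β) {s : ℝ} (hs0 : 0 ≤ s)
    (hs1 : s ≤ 1) {x : Fin n → ℝ} (hx : ∀ i, (A *ᵥ fun j => Real.exp (x j)) i ≤ s) :
    fr A β x ≤ -∑ j, x j + m * s ^ (1 / β) := by
  have hterm : ∀ i, (A *ᵥ fun j => Real.exp (x j)) i ^ ((1 + β) / β) ≤ s ^ (1 / β) := fun i =>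
    calc (A *ᵥ fun j => Real.exp (x j)) i ^ ((1 + β) / β) ≤ s ^ ((1 + β) / β) :=
          Real.rpow_le_rpow (mulVec_exp_nonneg hA x i) (hx i) (by positivity)
      _ ≤ s ^ (1 / β) :=
          Real.rpow_le_rpow_of_exponent_ge' hs0 hs1 (by positivity) (by gcongr; linarith)
  have hpen : ∑ i, (A *ᵥ fun j => Real.exp (x j)) i ^ ((1 + β) / β) ≤ m * s ^ (1 / β) := by
    simpa using sum_le_sum fun i (_ : i ∈ univ) => hterm i
  have hpen0 : 0 ≤ ∑ i, (A *ᵥ fun j => Real.exp (x j)) i ^ ((1 + β) / β) :=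
    sum_nonneg fun i _ => Real.rpow_nonneg (mulVec_exp_nonneg hA x i) _
  have hc : β / (1 + β) ≤ 1 := by rw [div_le_one (by linarith)]; linarith
  unfold fr
  linarith [mul_le_of_le_one_left hpen0 hc]

lemma le_fr_of_le_mulVec_exp (hA : ∀ i j, 0 ≤ A i j) (hβ : 0 < β) {s : ℝ} (hs : 1 ≤ s)
    {x : Fin n → ℝ} (i : Fin m) (hi : s ≤ (A *ᵥ fun j => Real.exp (x j)) i) :
    -∑ j, x j + β / (1 + β) * s ^ (1 / β) ≤ fr A β x := by
  have hpen : s ^ (1 / β) ≤ ∑ i, (A *ᵥ fun j => Real.exp (x j)) i ^ ((1 + β) / β) :=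
    calc s ^ (1 / β) ≤ (A *ᵥ fun j => Real.exp (x j)) i ^ (1 / β) :=
          Real.rpow_le_rpow (by linarith) hi (by positivity)
      _ ≤ (A *ᵥ fun j => Real.exp (x j)) i ^ ((1 + β) / β) :=
          Real.rpow_le_rpow_of_exponent_le (hs.trans hi) (by gcongr; linarith)
      _ ≤ ∑ k, (A *ᵥ fun j => Real.exp (x j)) k ^ ((1 + β) / β) :=
          single_le_sum (f := fun k => (A *ᵥ fun j => Real.exp (x j)) k ^ ((1 + β) / β))
            (fun k _ => Real.rpow_nonneg (mulVec_exp_nonneg hA x k) _) (mem_univ i)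
  unfold fr
  linarith [mul_le_mul_of_nonneg_left hpen (by positivity : 0 ≤ β / (1 + β))]

lemma fr_log_one_sub_mul_le (hA : ∀ i j, 0 ≤ A i j) (hm : 0 < m) (hn : 0 < n) (hε0 : 0 < ε)
    (hεn : ε ≤ n / 2) (hβ : β = ε / (6 * n * Real.log (2 * m * n ^ 2 / ε)))
    {x : Fin n → ℝ} (hx : ∀ j, 0 < x j) (hfeas : ∀ i, (A *ᵥ x) i ≤ 1) :
    fr A β (fun j => Real.log ((1 - ε / n) * x j)) ≤ -∑ j, Real.log (x j) + 3 * ε := by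
  have ht : ε / n ≤ 1 / 2 := by rw [div_le_iff₀ (by positivity)]; linarith
  have ht0 : 0 < ε / n := by positivity
  have hexp : (fun j => Real.exp (Real.log ((1 - ε / n) * x j))) = (1 - ε / n) • x := by
    ext j
    exact Real.exp_log (mul_pos (by linarith) (hx j))
  have hAx : ∀ i, (A *ᵥ fun j => Real.exp (Real.log ((1 - ε / n) * x j))) i ≤ 1 - ε / n := by
    intro i
    rw [hexp, Matrix.mulVec_smul, Pi.smul_apply, smul_eq_mul]
    exact mul_le_of_le_one_right (by linarith) (hfeas i)
  have hfr := fr_le_of_mulVec_exp_le hA (hβ ▸ smoothing_pos hm hn hε0 hεn) (by linarith)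
    (by linarith) hAx
  rw [sum_log_const_mul (by linarith) hx, Fintype.card_fin] at hfr
  have hlog : -(2 * ε) ≤ n * Real.log (1 - ε / n) := by
    have := mul_le_mul_of_nonneg_left (neg_two_mul_le_log_one_sub ht0.le ht) (Nat.cast_nonneg n)
    have hε : (n : ℝ) * (2 * (ε / n)) = 2 * ε := by field_simp
    linarith
  linarith [card_mul_one_sub_rpow_le hm hn hε0 hεn hβ]

lemma mulVec_exp_le_of_fr_le (hA : ∀ i j, 0 ≤ A i j) (hm : 0 < m) (hn : 0 < n) (hε0 : 0 < ε)
    (hεn : ε ≤ n / 2) (hβ : β = ε / (6 * n * Real.log (2 * m * n ^ 2 / ε)))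
    {x : Fin n → ℝ} (hx : ∀ j, x j ≤ 0) (hfr : fr A β x ≤ n * Real.log n + 4 * ε) (i : Fin m) :
    (A *ᵥ fun j => Real.exp (x j)) i ≤ 1 + ε / n := by
  by_contra! h
  have hcost := le_fr_of_le_mulVec_exp hA (hβ ▸ smoothing_pos hm hn hε0 hεn)
    (le_add_of_nonneg_right (by positivity)) i h.le
  have hsum : ∑ j, x j ≤ 0 := sum_nonpos fun j _ => hx j
  linarith [mul_log_add_lt_mul_one_add_rpow hm hn hε0 hεn hβ]

end RegularizedObjective

theorem optimizing_the_smoothened_function_is_enough_general {m n : ℕ}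
    (A : Matrix (Fin m) (Fin n) ℝ) (ε : ℝ)
    (hA : ∀ i j, 0 ≤ A i j)
    (hnorm : ∀ j, (∀ i, A i j ≤ 1) ∧ ∃ i, A i j = 1)
    (hε0 : 0 < ε) (hεn : ε ≤ n / 2)
    (β ω : ℝ)
    (hβ : β = ε / (6 * n * Real.log (2 * m * n ^ 2 / ε)))
    (hω : ω = Real.log (m * n / (1 - ε / n)))
    (xr xre : Fin n → ℝ)
    (hxr_min : ∀ x : Fin n → ℝ, (∀ j, x j ∈ Set.Icc (-ω) 0) → fr A β xr ≤ fr A β x)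
    (hxre_mem : ∀ j, xre j ∈ Set.Icc (-ω) 0)
    (hxre : fr A β xre - fr A β xr ≤ ε)
    (xs : Fin n → ℝ)
    (hxs_pos : ∀ j, 0 < xs j)
    (hxs_feas : ∀ i, A.mulVec xs i ≤ 1)
    (hmax : ∀ x : Fin n → ℝ, (∀ j, 0 < x j) → (∀ i, A.mulVec x i ≤ 1) →
      ∑ j, Real.log (x j) ≤ ∑ j, Real.log (xs j)) :
    (∀ i, A.mulVec (fun j => Real.exp (xre j) / (1 + ε / n)) i ≤ 1) ∧
    ∑ j, Real.log (xs j) - ∑ j, Real.log (Real.exp (xre j) / (1 + ε / n)) ≤ 5 * ε := by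
  have hn : 0 < n := Nat.pos_of_ne_zero fun h => by subst h; simp at hεn; linarith
  have hm : 0 < m := Fin.pos (hnorm ⟨0, hn⟩).2.choose
  have hεn1 : ε / n < 1 := by rw [div_lt_one (by positivity)]; linarith
  have hxs_le : ∀ j, xs j ≤ 1 := fun j => (hnorm j).2.elim fun _ hi =>
    le_one_of_mulVec_le_one hA (fun k => (hxs_pos k).le) (hxs_feas _) hi
  have hxs_ge : ∀ j, (n : ℝ)⁻¹ ≤ xs j := fun j => by
    simpa using inv_card_le_of_forall_sum_log_le (hnorm j).1 hxs_pos hxs_feas hmax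
  have hfr : fr A β xre ≤ -∑ j, Real.log (xs j) + 4 * ε := by
    have hmem := fun j =>
      hω ▸ log_one_sub_mul_mem_Icc hm hn (by positivity) hεn1 (hxs_ge j) (hxs_le j)
    linarith [hxr_min _ hmem, fr_log_one_sub_mul_le hA hm hn hε0 hεn hβ hxs_pos hxs_feas]
  have hopt : -∑ j, Real.log (xs j) ≤ n * Real.log n := by
    simpa using neg_sum_log_le_of_inv_card_le (x := xs) (by simpa using hxs_ge)
  have hfeas := mulVec_exp_le_of_fr_le hA hm hn hε0 hεn hβ (fun j => (hxre_mem j).2)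
    (by linarith)
  refine ⟨fun i => mulVec_div_le_one (by positivity) (hfeas i), ?_⟩
  rw [sum_log_exp_div (by positivity), Fintype.card_fin]
  linarith [neg_sum_le_fr hA (hβ ▸ smoothing_pos hm hn hε0 hεn) xre,
    natCast_mul_log_one_add_div_le n hε0.le]

/-- An `ε`-minimizer of the regularized problem over the box `B = [-ω,0]^n`
yields, after exponentiating and rescaling, a feasible `5ε`-maximizer of the
original 1-fair packing problem. -/
theorem optimizing_the_smoothened_function_is_enough {m n : ℕ}
    (A : Matrix (Fin m) (Fin n) ℝ) (ε : ℝ)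
    (hA : ∀ i j, 0 ≤ A i j)
    (hnorm : ∀ j, (∀ i, A i j ≤ 1) ∧ ∃ i, A i j = 1)
    (hε0 : 0 < ε) (hεn : ε ≤ n / 2)
    (β ω : ℝ)
    (hβ : β = ε / (6 * n * Real.log (2 * m * n ^ 2 / ε)))
    (hω : ω = Real.log (m * n / (1 - ε / n)))
    (xr xre : Fin n → ℝ)
    (hxr_mem : ∀ j, xr j ∈ Set.Icc (-ω) 0)
    (hxr_min : ∀ x : Fin n → ℝ, (∀ j, x j ∈ Set.Icc (-ω) 0) → fr A β xr ≤ fr A β x)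
    (hxre_mem : ∀ j, xre j ∈ Set.Icc (-ω) 0)
    (hxre : fr A β xre - fr A β xr ≤ ε)
    (xs : Fin n → ℝ)
    (hxs_pos : ∀ j, 0 < xs j)
    (hxs_feas : ∀ i, A.mulVec xs i ≤ 1)
    (hmax : ∀ x : Fin n → ℝ, (∀ j, 0 < x j) → (∀ i, A.mulVec x i ≤ 1) →
      ∑ j, Real.log (x j) ≤ ∑ j, Real.log (xs j)) :
    (∀ i, A.mulVec (fun j => Real.exp (xre j) / (1 + ε / n)) i ≤ 1) ∧
    ∑ j, Real.log (xs j) - ∑ j, Real.log (Real.exp (xre j) / (1 + ε / n)) ≤ 5 * ε :=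
  optimizing_the_smoothened_function_is_enough_general A ε hA hnorm hε0 hεn β ω hβ hω xr xre hxr_min
    hxre_mem hxre xs hxs_pos hxs_feas hmax
end

section
/- Let X ⊆ ℝ^n be a closed convex set, ψ : X → ℝ a map that is 1-strongly convex with respect to a norm ‖·‖, with Bregman divergence V_y(x) = ψ(x) − ψ(y) − ⟨∇ψ(y), x−y⟩, and let ‖·‖_* be the dual norm. Let ℓ ∈ ℝ^n be an arbitrary loss vector, η > 0, z^{(k−1)} ∈ X, and z^{(k)} = argmin_{z∈X}{ V_{z^{(k−1)}}(z) + η⟨ℓ, z⟩ }. Then for all u ∈ X: (a) η⟨ℓ, z^{(k−1)} − u⟩ ≤ (η²/2)‖ℓ‖_*² + V_{z^{(k−1)}}(u) − V_{z^{(k)}}(u); and (b) η⟨ℓ, z^{(k−1)} − u⟩ ≤ η⟨ℓ, z^{(k−1)} − z^{(k)}⟩ + V_{z^{(k−1)}}(u) − V_{z^{(k)}}(u). -/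
open scoped BigOperators RealInnerProductSpace

/-! Minimality of `z₁` gives the first-order condition `⟪∇ψ z₁ - ∇ψ z₀ + η • ℓ, u - z₁⟫ ≥ 0`,
which by the three-point identity for Bregman divergences reads
`η ⟪ℓ, z₁ - u⟫ ≤ V z₀ u - V z₁ u - V z₀ z₁`. Adding `η ⟪ℓ, z₀ - z₁⟫` gives (b) since
`V z₀ z₁ ≥ 0`, and (a) after bounding `η ⟪ℓ, z₀ - z₁⟫` by Fenchel–Young against
`V z₀ z₁ ≥ ½ N (z₁ - z₀)²`. -/

section Bregman

variable {E : Type*} [NormedAddCommGroup E] [InnerProductSpace ℝ E]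

def bregman (ψ : E → ℝ) (g : E → E) (y x : E) : ℝ :=
  ψ x - ψ y - ⟪g y, x - y⟫

theorem bregman_sub_bregman_sub_bregman (ψ : E → ℝ) (g : E → E) (x y u : E) :
    bregman ψ g y u - bregman ψ g x u - bregman ψ g y x = ⟪g x - g y, u - x⟫ := by
  simp only [bregman, inner_sub_left, inner_sub_right]
  ring

variable [CompleteSpace E]

theorem IsMinOn.inner_gradient_nonneg {f : E → ℝ} {s : Set E} {x y g : E}
    (hs : Convex ℝ s) (hmin : IsMinOn f s x) (hf : HasGradientAt f g x) (hx : x ∈ s)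
    (hy : y ∈ s) : 0 ≤ ⟪g, y - x⟫ := by
  have hcone : y - x ∈ posTangentConeAt s x :=
    sub_mem_posTangentConeAt_of_segment_subset (hs.segment_subset hx hy)
  simpa using hmin.localize.hasFDerivWithinAt_nonneg
    (hasGradientAt_iff_hasFDerivAt.mp hf).hasFDerivWithinAt hcone

theorem HasGradientAt.bregman_add_inner {ψ : E → ℝ} {g : E → E} {x : E}
    (hψ : HasGradientAt ψ (g x) x) (y ℓ : E) (η : ℝ) :
    HasGradientAt (fun z ↦ bregman ψ g y z + η * ⟪ℓ, z⟫) (g x - g y + η • ℓ) x := by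
  rw [hasGradientAt_iff_hasFDerivAt] at hψ ⊢
  have h := ((hψ.sub_const (ψ y)).sub
    ((innerSL ℝ (g y)).hasFDerivAt.sub_const ⟪g y, y⟫)).add
    ((innerSL ℝ ℓ).hasFDerivAt.const_smul η)
  have hfun : (fun z ↦ bregman ψ g y z + η * ⟪ℓ, z⟫) =
      ((fun z ↦ ψ z - ψ y) - fun z ↦ innerSL ℝ (g y) z - ⟪g y, y⟫) + η • ⇑(innerSL ℝ ℓ) := by
    ext z
    simp [bregman, inner_sub_right]
  rw [hfun]
  refine h.congr_fderiv ?_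
  ext v
  simp

theorem bregman_mirror_step_le {ψ : E → ℝ} {g : E → E} {X : Set E} {ℓ z₀ z₁ u : E} {η : ℝ}
    (hX : Convex ℝ X) (hψ : HasGradientAt ψ (g z₁) z₁)
    (hmin : IsMinOn (fun z ↦ bregman ψ g z₀ z + η * ⟪ℓ, z⟫) X z₁) (hz₁ : z₁ ∈ X) (hu : u ∈ X) :
    η * ⟪ℓ, z₁ - u⟫ ≤ bregman ψ g z₀ u - bregman ψ g z₁ u - bregman ψ g z₀ z₁ := by
  have hopt := hmin.inner_gradient_nonneg hX (hψ.bregman_add_inner z₀ ℓ η) hz₁ hu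
  rw [inner_add_left, real_inner_smul_left] at hopt
  have hflip : ⟪ℓ, z₁ - u⟫ = -⟪ℓ, u - z₁⟫ := by rw [← inner_neg_right, neg_sub]
  rw [bregman_sub_bregman_sub_bregman, hflip]
  linarith

end Bregman

theorem mirror_descent_lemma_general {n : ℕ}
    (X : Set (EuclideanSpace ℝ (Fin n)))
    (hXconv : Convex ℝ X)
    (N Nd : EuclideanSpace ℝ (Fin n) → ℝ)
    -- `N` is a norm
    (hN_smul : ∀ (a : ℝ) v, N (a • v) = |a| * N v)
    -- `Nd` dominates the dual norm pairing
    (hNd : ∀ v w, ⟪v, w⟫ ≤ Nd v * N w)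
    (ψ : EuclideanSpace ℝ (Fin n) → ℝ)
    (gψ : EuclideanSpace ℝ (Fin n) → EuclideanSpace ℝ (Fin n))
    (hgrad : ∀ x ∈ X, HasGradientAt ψ (gψ x) x)
    -- `ψ` is 1-strongly convex on `X` with respect to `N`
    (hstrong : ∀ x ∈ X, ∀ y ∈ X, ψ y + ⟪gψ y, x - y⟫ + (1 / 2) * (N (x - y)) ^ 2 ≤ ψ x)
    (V : EuclideanSpace ℝ (Fin n) → EuclideanSpace ℝ (Fin n) → ℝ)
    (hV : ∀ y x, V y x = ψ x - ψ y - ⟪gψ y, x - y⟫)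
    (ℓ : EuclideanSpace ℝ (Fin n)) (η : ℝ) (hη : 0 < η)
    (z0 z1 : EuclideanSpace ℝ (Fin n)) (hz0 : z0 ∈ X) (hz1 : z1 ∈ X)
    (hmin : ∀ z ∈ X, V z0 z1 + η * ⟪ℓ, z1⟫ ≤ V z0 z + η * ⟪ℓ, z⟫) :
    ∀ u ∈ X,
      (η * ⟪ℓ, z0 - u⟫ ≤ η ^ 2 / 2 * (Nd ℓ) ^ 2 + V z0 u - V z1 u) ∧
      (η * ⟪ℓ, z0 - u⟫ ≤ η * ⟪ℓ, z0 - z1⟫ + V z0 u - V z1 u) := by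
  intro u hu
  obtain rfl : V = bregman ψ gψ := funext₂ hV
  have hstep := bregman_mirror_step_le hXconv (hgrad z1 hz1) (isMinOn_iff.mpr hmin) hz1 hu
  have hbregman_ge : 1 / 2 * N (z0 - z1) ^ 2 ≤ bregman ψ gψ z0 z1 := by
    have hN_neg : N (z0 - z1) = N (z1 - z0) := by
      rw [← neg_sub, ← neg_one_smul ℝ, hN_smul, abs_neg, abs_one, one_mul]
    rw [hN_neg, bregman]
    linarith [hstrong z1 hz1 z0 hz0]
  have hsplit : ⟪ℓ, z0 - u⟫ = ⟪ℓ, z0 - z1⟫ + ⟪ℓ, z1 - u⟫ := by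
    rw [← inner_add_right, sub_add_sub_cancel]
  rw [hsplit, mul_add]
  refine ⟨?_, by linarith [sq_nonneg (N (z0 - z1))]⟩
  have hFY : η * ⟪ℓ, z0 - z1⟫ ≤ η ^ 2 / 2 * Nd ℓ ^ 2 + 1 / 2 * N (z0 - z1) ^ 2 := by
    nlinarith [mul_le_mul_of_nonneg_left (hNd ℓ (z0 - z1)) hη.le,
      sq_nonneg (η * Nd ℓ - N (z0 - z1))]
  linarith

/-- Mirror descent lemma: for a 1-strongly convex (w.r.t. an arbitrary norm `N`
with dual norm `Nd`) regularizer `ψ` with Bregman divergence `V`, the mirror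
descent step `z1 = argmin_{z ∈ X} { V_{z0}(z) + η⟨ℓ, z⟩ }` satisfies both the
classical regret bound (a) and the non-standard bound (b). -/
theorem mirror_descent_lemma {n : ℕ}
    (X : Set (EuclideanSpace ℝ (Fin n)))
    (hXclosed : IsClosed X) (hXconv : Convex ℝ X)
    (N Nd : EuclideanSpace ℝ (Fin n) → ℝ)
    -- `N` is a norm
    (hN_nonneg : ∀ v, 0 ≤ N v)
    (hN_smul : ∀ (a : ℝ) v, N (a • v) = |a| * N v)
    (hN_add : ∀ v w, N (v + w) ≤ N v + N w)
    (hN_def : ∀ v, N v = 0 → v = 0)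
    -- `Nd` dominates the dual norm pairing
    (hNd_nonneg : ∀ v, 0 ≤ Nd v)
    (hNd : ∀ v w, ⟪v, w⟫ ≤ Nd v * N w)
    (ψ : EuclideanSpace ℝ (Fin n) → ℝ)
    (gψ : EuclideanSpace ℝ (Fin n) → EuclideanSpace ℝ (Fin n))
    (hgrad : ∀ x ∈ X, HasGradientAt ψ (gψ x) x)
    -- `ψ` is 1-strongly convex on `X` with respect to `N`
    (hstrong : ∀ x ∈ X, ∀ y ∈ X, ψ y + ⟪gψ y, x - y⟫ + (1 / 2) * (N (x - y)) ^ 2 ≤ ψ x)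
    (V : EuclideanSpace ℝ (Fin n) → EuclideanSpace ℝ (Fin n) → ℝ)
    (hV : ∀ y x, V y x = ψ x - ψ y - ⟪gψ y, x - y⟫)
    (ℓ : EuclideanSpace ℝ (Fin n)) (η : ℝ) (hη : 0 < η)
    (z0 z1 : EuclideanSpace ℝ (Fin n)) (hz0 : z0 ∈ X) (hz1 : z1 ∈ X)
    (hmin : ∀ z ∈ X, V z0 z1 + η * ⟪ℓ, z1⟫ ≤ V z0 z + η * ⟪ℓ, z⟫) :
    ∀ u ∈ X,
      (η * ⟪ℓ, z0 - u⟫ ≤ η ^ 2 / 2 * (Nd ℓ) ^ 2 + V z0 u - V z1 u) ∧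
      (η * ⟪ℓ, z0 - u⟫ ≤ η * ⟪ℓ, z0 - z1⟫ + V z0 u - V z1 u) :=
  mirror_descent_lemma_general X hXconv N Nd hN_smul hNd ψ gψ hgrad hstrong V hV ℓ η hη z0 z1 hz0
    hz1 hmin
end

section
/- Let A be an m×n matrix with nonnegative entries, β > 0, and x ∈ ℝ^n. Let c ∈ [−1,1]^n and define Δ ∈ ℝ^n by Δ_j = −(c_j β/(4(1+β))) · ∇̄_j f_r(x), where ∇̄_j f_r(x) = min{1, ∇_j f_r(x)} is the truncated gradient. Then f_r(x+Δ) − f_r(x) ≤ Σ_{j=1}^n (1 − c_j/2) Δ_j ∇_j f_r(x). -/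
/-!
Write `p = (1 + β) / β` and `aᵢⱼ = Aᵢⱼ e^{xⱼ}`, so that `f_r(x) = -∑ⱼ xⱼ + (1/p) ∑ᵢ (∑ⱼ aᵢⱼ)^p`.
Moving to `x + Δ` replaces `∑ⱼ aᵢⱼ` by `∑ⱼ aᵢⱼ e^{Δⱼ}`, whose `p`-th power is at most
`(∑ⱼ aᵢⱼ)^{p-1} ∑ⱼ aᵢⱼ e^{pΔⱼ}` by Jensen's inequality for `t ↦ t^p`. As `|pΔⱼ| ≤ 1`,
`e^{pΔⱼ} ≤ 1 + pΔⱼ + (pΔⱼ)²`, which yields the separable upper model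
`∑ⱼ (-Δⱼ + (1 + ∇ⱼ)(Δⱼ + pΔⱼ²))`. For the truncated step `Δⱼ = -cⱼ κ min(1, ∇ⱼ)` with
`κ = 1/(4p)`, the quadratic part of the model is at most half of the first-order gain
`-cⱼ Δⱼ ∇ⱼ`, because `(1 + g) min(1, g)² ≤ 2 g min(1, g)` whenever `g ≥ -1`.
-/

open scoped BigOperators

/-- The `j`-th coordinate of the gradient of `f_r`. -/
noncomputable def gradFr {m n : ℕ} (A : Matrix (Fin m) (Fin n) ℝ) (β : ℝ)
    (x : Fin n → ℝ) (j : Fin n) : ℝ :=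
  -1 + ∑ i, (A.mulVec (fun j' => Real.exp (x j')) i) ^ (1 / β) * A i j * Real.exp (x j)

open Finset Real

theorem rpow_inner_le_weight_mul_Lp_of_nonneg {ι : Type*} (s : Finset ι) {p : ℝ} (hp : 1 ≤ p)
    {w f : ι → ℝ} (hw : ∀ i, 0 ≤ w i) (hf : ∀ i, 0 ≤ f i) :
    (∑ i ∈ s, w i * f i) ^ p ≤ (∑ i ∈ s, w i) ^ (p - 1) * ∑ i ∈ s, w i * f i ^ p := by
  have hp0 : p ≠ 0 := by positivity
  have hW : 0 ≤ ∑ i ∈ s, w i := sum_nonneg fun i _ ↦ hw i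
  have hS : 0 ≤ ∑ i ∈ s, w i * f i ^ p :=
    sum_nonneg fun i _ ↦ mul_nonneg (hw i) (rpow_nonneg (hf i) p)
  calc (∑ i ∈ s, w i * f i) ^ p
      ≤ ((∑ i ∈ s, w i) ^ (1 - p⁻¹) * (∑ i ∈ s, w i * f i ^ p) ^ p⁻¹) ^ p :=
        rpow_le_rpow (sum_nonneg fun i _ ↦ mul_nonneg (hw i) (hf i))
          (inner_le_weight_mul_Lp_of_nonneg s hp w f hw hf) (by positivity)
    _ = (∑ i ∈ s, w i) ^ (p - 1) * ∑ i ∈ s, w i * f i ^ p := by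
        rw [mul_rpow (rpow_nonneg hW _) (rpow_nonneg hS _), ← rpow_mul hW, ← rpow_mul hS,
          inv_mul_cancel₀ hp0, rpow_one, sub_mul, inv_mul_cancel₀ hp0, one_mul]

theorem rpow_sum_mul_exp_sub_rpow_sum_le {ι : Type*} (s : Finset ι) {p : ℝ} (hp : 1 ≤ p)
    {a Δ : ι → ℝ} (ha : ∀ i, 0 ≤ a i) (hΔ : ∀ i, |p * Δ i| ≤ 1) :
    ((∑ i ∈ s, a i * exp (Δ i)) ^ p - (∑ i ∈ s, a i) ^ p) / p
      ≤ (∑ i ∈ s, a i) ^ (p - 1) * ∑ i ∈ s, a i * (Δ i + p * Δ i ^ 2) := by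
  have hp0 : 0 < p := by linarith
  set z := ∑ i ∈ s, a i
  have hz : 0 ≤ z := sum_nonneg fun i _ ↦ ha i
  have hexp : ∀ i, exp (Δ i) ^ p ≤ 1 + p * (Δ i + p * Δ i ^ 2) := fun i ↦ by
    have := (abs_le.1 (abs_exp_sub_one_sub_id_le (hΔ i))).2
    rw [← exp_mul, mul_comm]
    linarith
  have hzp : z ^ (p - 1) * z = z ^ p := by
    conv_rhs => rw [← sub_add_cancel p 1, rpow_add' hz (by linarith), rpow_one]
  rw [div_le_iff₀ hp0]
  calc (∑ i ∈ s, a i * exp (Δ i)) ^ p - z ^ p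
      ≤ z ^ (p - 1) * ∑ i ∈ s, a i * exp (Δ i) ^ p - z ^ p := by
        gcongr
        exact rpow_inner_le_weight_mul_Lp_of_nonneg s hp ha fun i ↦ (exp_pos _).le
    _ ≤ z ^ (p - 1) * ∑ i ∈ s, a i * (1 + p * (Δ i + p * Δ i ^ 2)) - z ^ p := by
        gcongr with i
        · exact ha i
        · exact hexp i
    _ = z ^ (p - 1) * (∑ i ∈ s, a i * (Δ i + p * Δ i ^ 2)) * p := by
        have hsum : ∑ i ∈ s, a i * (1 + p * (Δ i + p * Δ i ^ 2))
            = z + p * ∑ i ∈ s, a i * (Δ i + p * Δ i ^ 2) := by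
          rw [mul_sum, ← sum_add_distrib]
          exact sum_congr rfl fun i _ ↦ by ring
        rw [hsum, ← hzp]
        ring

theorem quadratic_model_le_of_truncated_step {p κ c g Δ : ℝ} (hκ : 0 ≤ κ) (hpκ : 4 * p * κ ≤ 1)
    (hg : -1 ≤ g) (hΔ : Δ = -(c * κ) * min 1 g) :
    -Δ + (1 + g) * (Δ + p * Δ ^ 2) ≤ (1 - c / 2) * Δ * g := by
  have hG : (1 + g) * min 1 g ^ 2 ≤ 2 * (min 1 g * g) := by
    rcases le_total g 1 with h | h
    · rw [min_eq_right h]; nlinarith [sq_nonneg g]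
    · rw [min_eq_left h]; nlinarith
  set G := min 1 g
  have hG0 : 0 ≤ (1 + g) * G ^ 2 := by have := sq_nonneg G; nlinarith
  have hpκG : p * κ * ((1 + g) * G ^ 2) ≤ G * g / 2 := by nlinarith
  calc -Δ + (1 + g) * (Δ + p * Δ ^ 2)
      = (1 - c / 2) * Δ * g + c ^ 2 * κ * (p * κ * ((1 + g) * G ^ 2) - G * g / 2) := by
        rw [hΔ]; ring
    _ ≤ (1 - c / 2) * Δ * g := by
        have : 0 ≤ c ^ 2 * κ := by positivity
        nlinarith

theorem neg_one_le_gradFr {m n : ℕ} {A : Matrix (Fin m) (Fin n) ℝ} (hA : ∀ i j, 0 ≤ A i j)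
    (β : ℝ) (x : Fin n → ℝ) (j : Fin n) : -1 ≤ gradFr A β x j := by
  have hAx : ∀ i, 0 ≤ A.mulVec (fun j => exp (x j)) i := fun i ↦ by
    rw [Matrix.mulVec_apply_eq_sum]
    exact sum_nonneg fun k _ ↦ mul_nonneg (hA i k) (exp_pos _).le
  have : 0 ≤ ∑ i, (A.mulVec (fun j' => exp (x j')) i) ^ (1 / β) * A i j * exp (x j) :=
    sum_nonneg fun i _ ↦ by have := rpow_nonneg (hAx i) (1 / β); have := hA i j; positivity
  unfold gradFr
  linarith

theorem fr_add_sub_fr_le {m n : ℕ} {A : Matrix (Fin m) (Fin n) ℝ} (hA : ∀ i j, 0 ≤ A i j)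
    {β : ℝ} (hβ : 0 < β) (x Δ : Fin n → ℝ) (hΔ : ∀ j, |(1 + β) / β * Δ j| ≤ 1) :
    fr A β (x + Δ) - fr A β x
      ≤ ∑ j, (-Δ j + (1 + gradFr A β x j) * (Δ j + (1 + β) / β * Δ j ^ 2)) := by
  set p := (1 + β) / β
  have hp : 1 ≤ p := by rw [le_div_iff₀ hβ]; linarith
  have hβp : β / (1 + β) = p⁻¹ := (inv_div _ _).symm
  have hp1 : 1 / β = p - 1 := by simp only [p]; field_simp; ring
  set a : Fin m → Fin n → ℝ := fun i j ↦ A i j * exp (x j)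
  have ha : ∀ i j, 0 ≤ a i j := fun i j ↦ mul_nonneg (hA i j) (exp_pos _).le
  have hgrad : ∀ j, 1 + gradFr A β x j = ∑ i, (∑ k, a i k) ^ (p - 1) * a i j := fun j ↦ by
    simp only [gradFr, Matrix.mulVec_apply_eq_sum, a, hp1, mul_assoc]
    ring
  have hrow : ∀ i, ((∑ j, a i j * exp (Δ j)) ^ p - (∑ j, a i j) ^ p) / p
      ≤ (∑ j, a i j) ^ (p - 1) * ∑ j, a i j * (Δ j + p * Δ j ^ 2) := fun i ↦
    rpow_sum_mul_exp_sub_rpow_sum_le univ hp (ha i) hΔ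
  calc fr A β (x + Δ) - fr A β x
      = -∑ j, Δ j + ∑ i, ((∑ j, a i j * exp (Δ j)) ^ p - (∑ j, a i j) ^ p) / p := by
        simp only [fr, Matrix.mulVec_apply_eq_sum, a, hβp, Pi.add_apply, exp_add, sum_add_distrib,
          ← sum_div, sum_sub_distrib, mul_assoc]
        ring
    _ ≤ -∑ j, Δ j + ∑ i, (∑ j, a i j) ^ (p - 1) * ∑ j, a i j * (Δ j + p * Δ j ^ 2) := by
        gcongr with i; exact hrow i
    _ = ∑ j, (-Δ j + (1 + gradFr A β x j) * (Δ j + p * Δ j ^ 2)) := by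
        simp only [hgrad, sum_add_distrib, sum_neg_distrib, sum_mul, mul_sum]
        rw [sum_comm]
        simp only [mul_assoc]

/-- Descent lemma for the regularized 1-fair packing objective: for a step `Δ`
proportional to the truncated gradient, the decrease of `f_r` is controlled by
the (untruncated) gradient. -/
theorem fair_packing_descent_lemma {m n : ℕ}
    (A : Matrix (Fin m) (Fin n) ℝ) (β : ℝ)
    (hA : ∀ i j, 0 ≤ A i j) (hβ : 0 < β)
    (x c : Fin n → ℝ) (hc : ∀ j, c j ∈ Set.Icc (-1 : ℝ) 1)
    (Δ : Fin n → ℝ)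
    (hΔ : ∀ j, Δ j = -(c j * β / (4 * (1 + β))) * min 1 (gradFr A β x j)) :
    fr A β (x + Δ) - fr A β x ≤ ∑ j, (1 - c j / 2) * Δ j * gradFr A β x j := by
  have hg := neg_one_le_gradFr hA β x
  have hpκ : 4 * ((1 + β) / β) * (β / (4 * (1 + β))) = 1 := by field_simp
  have hstep : ∀ j, |(1 + β) / β * Δ j| ≤ 1 := fun j ↦ by
    have hG : |min 1 (gradFr A β x j)| ≤ 1 :=
      abs_le.2 ⟨le_min (by norm_num) (hg j), min_le_left _ _⟩
    have : (1 + β) / β * Δ j = -(c j * min 1 (gradFr A β x j)) / 4 := by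
      rw [hΔ j]; field_simp
    rw [this, abs_div, abs_neg, abs_mul, abs_of_pos (four_pos : (0 : ℝ) < 4)]
    linarith [mul_le_one₀ (abs_le.2 (hc j)) (abs_nonneg _) hG]
  calc fr A β (x + Δ) - fr A β x
      ≤ ∑ j, (-Δ j + (1 + gradFr A β x j) * (Δ j + (1 + β) / β * Δ j ^ 2)) :=
        fr_add_sub_fr_le hA hβ x Δ hstep
    _ ≤ ∑ j, (1 - c j / 2) * Δ j * gradFr A β x j :=
        sum_le_sum fun j _ ↦ quadratic_model_le_of_truncated_step (by positivity) hpκ.le (hg j)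
          (by rw [hΔ j, mul_div_assoc])
end

section
/- Let A be a normalized nonnegative m×n matrix, ε ∈ (0, n/2], β = ε/(6n log(2mn²/ε)), ω = log(mn/(1−ε/n)), L = max{4ω(1+β)/β, 16n log(2mn)/(3ε) + 1/3}, τ = 1/(3L), η_0 = 1/(3L), and η_k = η_{k−1}/(1−τ) for k ≥ 1, and let B = [−ω, 0]^n. Define x^{(0)} = y^{(0)} = z^{(0)} = −ω·1_n and, for k ≥ 1: x^{(k)} = τ z^{(k−1)} + (1−τ) y^{(k−1)}; z^{(k)} = argmin_{z∈B}{ (1/(2ω))‖z − z^{(k−1)}‖₂² + η_k⟨∇̄f_r(x^{(k)}), z⟩ }; y^{(k)} = x^{(k)} + (1/(η_k L))(z^{(k)} − z^{(k−1)}). Then for all k ≥ 0, the iterates x^{(k)}, y^{(k)}, z^{(k)} all lie in the box B. -/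
/-!
The coordinates decouple. `z` stays in the box by construction and `x` is a convex combination
of `y` and `z`. For the upper bound on `y`, a unit entry in column `j` gives
`min 1 (∇_j f_r(x)) ≥ -1 + exp ((1 + β) / β * x_j) ≥ (1 + β) / β * x_j`; the mirror step is
coordinatewise optimal, so `z_j` increases by at most `2 ω η_k (1 + β) / β * (-x_j)`, and
`L ≥ 4 ω (1 + β) / β` turns this into `y_j ≤ x_j + (-x_j) = 0`. For the lower bound, with
`c_k = 1 / (η_k L)` the invariant `c_k (z_k + ω) ≤ y_k + ω` is preserved because
`c_{k+1} = (1 - τ) c_k`.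
-/

open scoped BigOperators

open Real Set Finset Matrix

lemma neg_one_add_exp_le_gradFr {m n : ℕ} {A : Matrix (Fin m) (Fin n) ℝ} {β : ℝ}
    (hA : ∀ i j, 0 ≤ A i j) (hβ : 0 < β) (x : Fin n → ℝ) {i₀ : Fin m} {j : Fin n}
    (hcol : A i₀ j = 1) :
    -1 + exp ((1 + β) / β * x j) ≤ gradFr A β x j := by
  set e : Fin n → ℝ := fun j' => exp (x j')
  have hAe : ∀ i, 0 ≤ (A *ᵥ e) i := fun i =>
    show 0 ≤ ∑ j', A i j' * e j' from sum_nonneg fun j' _ => mul_nonneg (hA i j') (exp_pos _).le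
  have he : e j ≤ (A *ᵥ e) i₀ :=
    calc e j = A i₀ j * e j := by rw [hcol, one_mul]
      _ ≤ ∑ j', A i₀ j' * e j' :=
        single_le_sum (f := fun j' => A i₀ j' * e j')
          (fun j' _ => mul_nonneg (hA i₀ j') (exp_pos _).le) (mem_univ j)
  calc -1 + exp ((1 + β) / β * x j) = -1 + e j ^ (1 / β) * A i₀ j * e j := by
        rw [hcol, mul_one, ← exp_mul, ← exp_add]
        congr 1
        field_simp
    _ ≤ -1 + (A *ᵥ e) i₀ ^ (1 / β) * A i₀ j * e j := by gcongr
    _ ≤ gradFr A β x j := by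
        unfold gradFr
        gcongr
        exact single_le_sum (f := fun i => (A *ᵥ e) i ^ (1 / β) * A i j * e j)
          (fun i _ => mul_nonneg (mul_nonneg (rpow_nonneg (hAe i) _) (hA i j)) (exp_pos _).le)
          (mem_univ i₀)

lemma mul_le_min_one_gradFr {m n : ℕ} {A : Matrix (Fin m) (Fin n) ℝ} {β : ℝ}
    (hA : ∀ i j, 0 ≤ A i j) (hβ : 0 < β) {x : Fin n → ℝ} {i₀ : Fin m} {j : Fin n}
    (hcol : A i₀ j = 1) (hx : x j ≤ 0) :
    (1 + β) / β * x j ≤ min 1 (gradFr A β x j) :=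
  le_min (by linarith [mul_nonpos_of_nonneg_of_nonpos (by positivity : 0 ≤ (1 + β) / β) hx])
    (by linarith [add_one_le_exp ((1 + β) / β * x j), neg_one_add_exp_le_gradFr hA hβ x hcol])

lemma isMinOn_apply_of_sum_le {ι : Type*} [Fintype ι] [DecidableEq ι] {φ : ι → ℝ → ℝ}
    {S : Set ℝ} {z : ι → ℝ} (hz : ∀ i, z i ∈ S)
    (hmin : ∀ w : ι → ℝ, (∀ i, w i ∈ S) → ∑ i, φ i (z i) ≤ ∑ i, φ i (w i)) (j : ι) :
    IsMinOn (φ j) S (z j) := by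
  intro t ht
  have h := hmin (Function.update z j t) fun i => by
    rcases eq_or_ne i j with rfl | hij
    · simpa using ht
    · simpa [hij] using hz i
  simp only [Function.apply_update (fun i => φ i), sum_update_of_mem (mem_univ j)] at h
  rw [← add_sum_erase _ _ (mem_univ j), ← sdiff_singleton_eq_erase] at h
  exact (add_le_add_iff_right _).1 h

lemma isMinOn_prox_apply {ι : Type*} [Fintype ι] [DecidableEq ι] {c η : ℝ} {S : Set ℝ}
    {g z z' : ι → ℝ} (hz' : ∀ i, z' i ∈ S)
    (hmin : ∀ w : ι → ℝ, (∀ i, w i ∈ S) →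
      c * ∑ i, (z' i - z i) ^ 2 + η * ∑ i, g i * z' i
        ≤ c * ∑ i, (w i - z i) ^ 2 + η * ∑ i, g i * w i) (j : ι) :
    IsMinOn (fun t => c * (t - z j) ^ 2 + η * (g j * t)) S (z' j) :=
  isMinOn_apply_of_sum_le (φ := fun i t => c * (t - z i) ^ 2 + η * (g i * t)) hz'
    (fun w hw => by simpa only [mul_sum, ← sum_add_distrib] using hmin w hw) j

lemma prox_step_le {ω η L κ g x z z' : ℝ} {S : Set ℝ}
    (hmin : IsMinOn (fun t => 1 / (2 * ω) * (t - z) ^ 2 + η * (g * t)) S z') (hz : z ∈ S)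
    (hω : 0 < ω) (hη : 0 < η) (hL : 0 < L) (hLκ : 2 * ω * κ ≤ L) (hx : x ≤ 0)
    (hg : κ * x ≤ g) :
    1 / (η * L) * (z' - z) ≤ -x := by
  have hopt : (z' - z) ^ 2 ≤ 2 * ω * η * -g * (z' - z) := by
    have h := isMinOn_iff.1 hmin z hz
    simp only [sub_self] at h
    field_simp at h
    linarith
  rcases le_or_gt (z' - z) 0 with hD | hD
  · nlinarith [mul_nonpos_of_nonneg_of_nonpos (by positivity : 0 ≤ 1 / (η * L)) hD]
  · have hg' : -g ≤ κ * -x := by linarith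
    have hD' : z' - z ≤ 2 * ω * η * (κ * -x) := by
      refine le_of_mul_le_mul_right ?_ hD
      calc (z' - z) * (z' - z) = (z' - z) ^ 2 := by ring
        _ ≤ 2 * ω * η * -g * (z' - z) := hopt
        _ ≤ 2 * ω * η * (κ * -x) * (z' - z) := by gcongr
    rw [one_div_mul_eq_div, div_le_iff₀ (by positivity)]
    calc z' - z ≤ -x * (η * (2 * ω * κ)) := by linarith
      _ ≤ -x * (η * L) := by gcongr; linarith

lemma iterates_mem_Icc_of_step_le {ω τ : ℝ} {c x y z : ℕ → ℝ}
    (hτ0 : 0 ≤ τ) (hτ1 : τ ≤ 1) (hc : ∀ k, 0 ≤ c k) (hc_succ : ∀ k, c (k + 1) = (1 - τ) * c k)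
    (hx0 : x 0 = -ω) (hy0 : y 0 = -ω) (hz0 : z 0 = -ω)
    (hx : ∀ k, x (k + 1) = τ * z k + (1 - τ) * y k)
    (hz : ∀ k, z (k + 1) ∈ Icc (-ω) 0)
    (hy : ∀ k, y (k + 1) = x (k + 1) + c (k + 1) * (z (k + 1) - z k))
    (hstep : ∀ k, x (k + 1) ≤ 0 → c (k + 1) * (z (k + 1) - z k) ≤ -x (k + 1)) :
    ∀ k, x k ∈ Icc (-ω) 0 ∧ y k ∈ Icc (-ω) 0 ∧ z k ∈ Icc (-ω) 0 := by
  have hω : -ω ≤ 0 := (hz 0).1.trans (hz 0).2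
  have hx_mem : ∀ k, y k ∈ Icc (-ω) 0 → z k ∈ Icc (-ω) 0 → x (k + 1) ∈ Icc (-ω) 0 :=
    fun k hy hz => by
      simpa only [hx, smul_eq_mul] using
        convex_Icc (-ω) 0 hz hy hτ0 (sub_nonneg.2 hτ1) (add_sub_cancel τ 1)
  have inv : ∀ k, z k ∈ Icc (-ω) 0 ∧ y k ∈ Icc (-ω) 0 ∧ c k * (z k + ω) ≤ y k + ω := by
    intro k
    induction k with
    | zero => simp [hz0, hy0, hω]
    | succ k ih =>
      obtain ⟨hzk, hyk, hinv⟩ := ih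
      have hxk := hx_mem k hyk hzk
      have hτz : 0 ≤ τ * (z k + ω) := mul_nonneg hτ0 (by linarith [hzk.1])
      have hy_mul := mul_le_mul_of_nonneg_left hinv (sub_nonneg.2 hτ1)
      have hinv' : c (k + 1) * (z (k + 1) + ω) ≤ y (k + 1) + ω := by
        rw [hy k, hx k, hc_succ k]
        linarith
      have hcz := mul_nonneg (hc (k + 1)) (neg_le_iff_add_nonneg.1 (hz k).1)
      exact ⟨hz k, ⟨by linarith, by linarith [hy k, hstep k hxk.2]⟩, hinv'⟩
  intro k
  cases k with
  | zero => simp [hx0, hy0, hz0, hω]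
  | succ k => exact ⟨hx_mem k (inv k).2.1 (inv k).1, (inv (k + 1)).2.1, (inv (k + 1)).1⟩

lemma parameters_bounds {m n : ℕ} {ε β ω L : ℝ} (hm : 0 < m) (hn : 0 < n) (hε0 : 0 < ε)
    (hεn : ε ≤ n / 2)
    (hβ : β = ε / (6 * n * log (2 * m * n ^ 2 / ε)))
    (hω : ω = log (m * n / (1 - ε / n)))
    (hL : L = max (4 * ω * (1 + β) / β) (16 * n * log (2 * m * n) / (3 * ε) + 1 / 3)) :
    0 < β ∧ 0 < ω ∧ 2 * ω * ((1 + β) / β) ≤ L ∧ 1 / 3 < L := by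
  have hm' : (1 : ℝ) ≤ m := by exact_mod_cast hm
  have hn' : (1 : ℝ) ≤ n := by exact_mod_cast hn
  have hβ0 : 0 < β := by
    rw [hβ]
    refine div_pos hε0 (mul_pos (by positivity) (log_pos ?_))
    rw [lt_div_iff₀ hε0]
    nlinarith
  have hω0 : 0 < ω := by
    have hεn' : ε / n ≤ 1 / 2 := by rw [div_le_iff₀ (by positivity)]; linarith
    have hεn0 : 0 < ε / n := by positivity
    rw [hω]
    refine log_pos ((lt_div_iff₀ (by linarith)).2 ?_)
    nlinarith
  refine ⟨hβ0, hω0, ?_, ?_⟩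
  · calc 2 * ω * ((1 + β) / β) ≤ 4 * ω * (1 + β) / β := by
          rw [mul_div_assoc]; gcongr; norm_num
      _ ≤ L := hL ▸ le_max_left _ _
  · have : 0 < log (2 * m * n) := log_pos (by nlinarith)
    have : 0 < 16 * n * log (2 * m * n) / (3 * ε) := by positivity
    exact hL ▸ lt_max_of_lt_right (by linarith)

lemma stepSize_pos {τ : ℝ} {η : ℕ → ℝ} (hτ : τ < 1) (h0 : 0 < η 0)
    (hη : ∀ k, η (k + 1) = η k / (1 - τ)) : ∀ k, 0 < η k
  | 0 => h0
  | k + 1 => hη k ▸ div_pos (stepSize_pos hτ h0 hη k) (sub_pos.2 hτ)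

/-- All iterates of the accelerated descent method for 1-fair packing remain in
the box `B = [-ω, 0]^n`. -/
theorem iterates_remain_in_box {m n : ℕ}
    (A : Matrix (Fin m) (Fin n) ℝ)
    (hA : ∀ i j, 0 ≤ A i j)
    (hnorm : ∀ j, (∀ i, A i j ≤ 1) ∧ ∃ i, A i j = 1)
    (ε : ℝ) (hε0 : 0 < ε) (hεn : ε ≤ n / 2)
    (β ω L τ : ℝ)
    (hβ : β = ε / (6 * n * Real.log (2 * m * n ^ 2 / ε)))
    (hω : ω = Real.log (m * n / (1 - ε / n)))
    (hL : L = max (4 * ω * (1 + β) / β) (16 * n * Real.log (2 * m * n) / (3 * ε) + 1 / 3))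
    (hτ : τ = 1 / (3 * L))
    (η : ℕ → ℝ) (hη0 : η 0 = 1 / (3 * L)) (hηk : ∀ k, η (k + 1) = η k / (1 - τ))
    (x y z : ℕ → Fin n → ℝ)
    (hx0 : x 0 = fun _ => -ω) (hy0 : y 0 = fun _ => -ω) (hz0 : z 0 = fun _ => -ω)
    (hxk : ∀ k, x (k + 1) = τ • z k + (1 - τ) • y k)
    (hzk_mem : ∀ k i, z (k + 1) i ∈ Set.Icc (-ω) 0)
    (hzk_min : ∀ k, ∀ w : Fin n → ℝ, (∀ i, w i ∈ Set.Icc (-ω) 0) →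
      (1 / (2 * ω)) * (∑ i, (z (k + 1) i - z k i) ^ 2)
          + η (k + 1) * ∑ i, min 1 (gradFr A β (x (k + 1)) i) * z (k + 1) i
        ≤ (1 / (2 * ω)) * (∑ i, (w i - z k i) ^ 2)
          + η (k + 1) * ∑ i, min 1 (gradFr A β (x (k + 1)) i) * w i)
    (hyk : ∀ k, y (k + 1) = x (k + 1) + (1 / (η (k + 1) * L)) • (z (k + 1) - z k)) :
    ∀ k, (∀ i, x k i ∈ Set.Icc (-ω) 0) ∧ (∀ i, y k i ∈ Set.Icc (-ω) 0) ∧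
         (∀ i, z k i ∈ Set.Icc (-ω) 0) := by
  suffices h : ∀ j k, x k j ∈ Icc (-ω) 0 ∧ y k j ∈ Icc (-ω) 0 ∧ z k j ∈ Icc (-ω) 0 from
    fun k => ⟨fun j => (h j k).1, fun j => (h j k).2.1, fun j => (h j k).2.2⟩
  intro j
  obtain ⟨i₀, hcol⟩ := (hnorm j).2
  obtain ⟨hβ0, hω0, hLω, hL3⟩ :=
    parameters_bounds i₀.pos j.pos hε0 hεn hβ hω hL
  have hτ0 : 0 < τ := by rw [hτ]; positivity
  have hτ1 : τ < 1 := by rw [hτ, div_lt_one (by positivity)]; linarith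
  have hη := stepSize_pos hτ1 (by rw [hη0]; positivity) hηk
  have hz_mem : ∀ k, z k j ∈ Icc (-ω) 0
    | 0 => by simp [hz0, hω0.le]
    | k + 1 => hzk_mem k j
  refine iterates_mem_Icc_of_step_le (c := fun k => 1 / (η k * L)) hτ0.le hτ1.le
    (fun k => by have := hη k; positivity) (fun k => by rw [hηk]; field_simp)
    (by rw [hx0]) (by rw [hy0]) (by rw [hz0]) (fun k => by simp [hxk]) (fun k => hzk_mem k j)
    (fun k => by simp [hyk]) fun k hxj => ?_
  exact prox_step_le (isMinOn_prox_apply (hzk_mem k) (hzk_min k) j) (hz_mem k) hω0 (hη _)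
    (by linarith) hLω hxj (mul_le_min_one_gradFr hA hβ0 hcol hxj)
end

section
/- Let A be a nonnegative m×n matrix, let λ ∈ Δ_m be such that A^Tλ has strictly positive coordinates, let p^λ = c(A^Tλ), and suppose A p^λ ≤ (1+ε)·1_m for some ε ≥ 0. Let λ* be a minimizer of g over {λ ∈ Δ_m : A^Tλ > 0}. Then g(λ) − g(λ*) ≤ n log(1+ε) ≤ nε. -/
/-!
Weak duality against the centroid point. For any `μ ∈ Δ_m` with `A^Tμ > 0`, the ratios
`r_j = (A^Tμ)_j / (A^Tλ)_j` satisfy `Σ_j r_j = n ⟨μ, A p^λ⟩ ≤ n(1+ε)`, so by concavity of `log`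
(`log r ≤ log(1+ε) + r/(1+ε) - 1`) we get `Σ_j log r_j ≤ n log(1+ε)`, i.e.
`g(λ) - g(μ) ≤ n log(1+ε)`. Taking `μ = λ*` gives the claim, and `log(1+ε) ≤ ε` gives the rest.
-/

open Real Matrix Finset

lemma Real.log_le_log_add_div_sub_one {x c : ℝ} (hx : 0 < x) (hc : 0 < c) :
    log x ≤ log c + x / c - 1 := by
  have := log_le_sub_one_of_pos (div_pos hx hc)
  rw [log_div hx.ne' hc.ne'] at this
  linarith

section Centroid

variable {ι κ : Type*} [Fintype ι] [Fintype κ]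

noncomputable def centroidPoint (h : κ → ℝ) : κ → ℝ := fun j => 1 / (Fintype.card κ * h j)

lemma sum_log_sub_sum_log_le_of_sum_div_le {h h' : κ → ℝ} (hh : ∀ j, 0 < h j)
    (hh' : ∀ j, 0 < h' j) {c : ℝ} (hc : 0 < c) (hsum : ∑ j, h' j / h j ≤ Fintype.card κ * c) :
    ∑ j, log (h' j) - ∑ j, log (h j) ≤ Fintype.card κ * log c := by
  have hmean : (∑ j, h' j / h j) / c ≤ Fintype.card κ := (div_le_iff₀ hc).2 hsum
  calc ∑ j, log (h' j) - ∑ j, log (h j)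
      = ∑ j, log (h' j / h j) := by
        rw [← sum_sub_distrib]
        exact sum_congr rfl fun j _ => (log_div (hh' j).ne' (hh j).ne').symm
    _ ≤ ∑ j, (log c + h' j / h j / c - 1) :=
        sum_le_sum fun j _ => log_le_log_add_div_sub_one (div_pos (hh' j) (hh j)) hc
    _ = Fintype.card κ * log c + ((∑ j, h' j / h j) / c - Fintype.card κ) := by
        simp only [sum_sub_distrib, sum_add_distrib, sum_div, sum_const, card_univ,
          nsmul_eq_mul, mul_one]
        ring
    _ ≤ Fintype.card κ * log c := by linarith

lemma sum_transpose_mulVec_div_le (A : Matrix ι κ ℝ) {h : κ → ℝ} (hh : ∀ j, 0 < h j)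
    {c : ℝ} (hfeas : ∀ i, (A *ᵥ centroidPoint h) i ≤ c)
    {μ : ι → ℝ} (hμ_nonneg : ∀ i, 0 ≤ μ i) (hμ_sum : ∑ i, μ i = 1) :
    ∑ j, (Aᵀ *ᵥ μ) j / h j ≤ Fintype.card κ * c := by
  have hratio : ∀ j, (Aᵀ *ᵥ μ) j / h j = Fintype.card κ * ((Aᵀ *ᵥ μ) j * centroidPoint h j) := by
    intro j
    have : (Fintype.card κ : ℝ) ≠ 0 := Nat.cast_ne_zero.2 (Fintype.card_pos_iff.2 ⟨j⟩).ne'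
    have := (hh j).ne'
    simp only [centroidPoint]
    field_simp
  have hpair : μ ⬝ᵥ (A *ᵥ centroidPoint h) ≤ c :=
    calc μ ⬝ᵥ (A *ᵥ centroidPoint h) ≤ ∑ i, μ i * c :=
          sum_le_sum fun i _ => mul_le_mul_of_nonneg_left (hfeas i) (hμ_nonneg i)
      _ = c := by rw [← sum_mul, hμ_sum, one_mul]
  calc ∑ j, (Aᵀ *ᵥ μ) j / h j = Fintype.card κ * (μ ⬝ᵥ (A *ᵥ centroidPoint h)) := by
        rw [dotProduct_mulVec, ← mulVec_transpose, dotProduct, mul_sum]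
        exact sum_congr rfl fun j _ => hratio j
    _ ≤ Fintype.card κ * c := by gcongr

end Centroid

theorem the_proxy_is_indeed_a_proxy_general {m n : ℕ}
    (A : Matrix (Fin m) (Fin n) ℝ)
    (ε : ℝ) (hε : 0 ≤ ε)
    (lam : Fin m → ℝ)
    (hlam_pos : ∀ j, 0 < A.transpose.mulVec lam j)
    (hfeas : ∀ i, A.mulVec (fun j => 1 / ((n : ℝ) * A.transpose.mulVec lam j)) i ≤ 1 + ε)
    (lams : Fin m → ℝ) (hlams_nonneg : ∀ i, 0 ≤ lams i) (hlams_sum : ∑ i, lams i = 1)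
    (hlams_pos : ∀ j, 0 < A.transpose.mulVec lams j) :
    ((-∑ j, Real.log (A.transpose.mulVec lam j) - n * Real.log n)
        - (-∑ j, Real.log (A.transpose.mulVec lams j) - n * Real.log n)
      ≤ n * Real.log (1 + ε)) ∧
    (n : ℝ) * Real.log (1 + ε) ≤ n * ε := by
  have h1ε : 0 < 1 + ε := by linarith
  have hfeas' : ∀ i, (A *ᵥ centroidPoint (Aᵀ *ᵥ lam)) i ≤ 1 + ε := by
    unfold centroidPoint
    simpa only [Fintype.card_fin] using hfeas
  have hgap := sum_log_sub_sum_log_le_of_sum_div_le hlam_pos hlams_pos h1ε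
    (sum_transpose_mulVec_div_le A hlam_pos hfeas' hlams_nonneg hlams_sum)
  rw [Fintype.card_fin] at hgap
  refine ⟨by linarith, ?_⟩
  have hlog : log (1 + ε) ≤ ε := by linarith [log_le_sub_one_of_pos h1ε]
  gcongr

/-- If `λ ∈ Δ_m` has `A^Tλ > 0` and its centroid point `p^λ = c(A^Tλ)` satisfies
`A p^λ ≤ (1+ε)·1`, then `λ` is an `n·log(1+ε) ≤ n·ε` approximate minimizer of
the dual objective `g`. -/
theorem the_proxy_is_indeed_a_proxy {m n : ℕ}
    (A : Matrix (Fin m) (Fin n) ℝ) (hA : ∀ i j, 0 ≤ A i j)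
    (ε : ℝ) (hε : 0 ≤ ε)
    (lam : Fin m → ℝ) (hlam_nonneg : ∀ i, 0 ≤ lam i) (hlam_sum : ∑ i, lam i = 1)
    (hlam_pos : ∀ j, 0 < A.transpose.mulVec lam j)
    (hfeas : ∀ i, A.mulVec (fun j => 1 / ((n : ℝ) * A.transpose.mulVec lam j)) i ≤ 1 + ε)
    (lams : Fin m → ℝ) (hlams_nonneg : ∀ i, 0 ≤ lams i) (hlams_sum : ∑ i, lams i = 1)
    (hlams_pos : ∀ j, 0 < A.transpose.mulVec lams j)
    (hmin : ∀ μ : Fin m → ℝ, (∀ i, 0 ≤ μ i) → (∑ i, μ i = 1) →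
      (∀ j, 0 < A.transpose.mulVec μ j) →
      (-∑ j, Real.log (A.transpose.mulVec lams j) - n * Real.log n)
        ≤ -∑ j, Real.log (A.transpose.mulVec μ j) - n * Real.log n) :
    ((-∑ j, Real.log (A.transpose.mulVec lam j) - n * Real.log n)
        - (-∑ j, Real.log (A.transpose.mulVec lams j) - n * Real.log n)
      ≤ n * Real.log (1 + ε)) ∧
    (n : ℝ) * Real.log (1 + ε) ≤ n * ε :=
  the_proxy_is_indeed_a_proxy_general A ε hε lam hlam_pos hfeas lams hlams_nonneg hlams_sum
    hlams_pos
end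

section
/- Let A be a normalized nonnegative m×n matrix and let λ* ∈ Δ_m, with A^Tλ* having strictly positive coordinates, be a minimizer of g over {λ ∈ Δ_m : A^Tλ > 0}. Then the point x* = c(A^Tλ*), i.e., x*_i = 1/(n (A^Tλ*)_i), is feasible (A x* ≤ 1_m) and maximizes f(x) = Σ_{i=1}^n log x_i over P = {x ∈ ℝ_{≥0}^n : Ax ≤ 1_m}. -/
/-!
Write `h = Aᵀλ*`. Moving `λ*` towards the vertex `eᵢ` of the simplex stays feasible for small
steps, so the derivative `∑ⱼ (Aᵢⱼ - hⱼ) / hⱼ` of `∑ⱼ log` along that segment is `≤ 0`, i.e.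
`∑ⱼ Aᵢⱼ / hⱼ ≤ n`; this is exactly `(A x*)ᵢ ≤ 1`. For any feasible `x > 0`,
`⟨h, x⟩ = ⟨λ*, A x⟩ ≤ 1`, and `log (n hⱼ xⱼ) ≤ n hⱼ xⱼ - 1` summed over `j` gives
`∑ log xⱼ - ∑ log x*ⱼ ≤ n ⟨h, x⟩ - n ≤ 0`.
-/

open Set Real Matrix

theorem HasDerivAt.nonpos_of_isMaxOn_Ico {f : ℝ → ℝ} {f' a b : ℝ} (hab : a < b)
    (hf : HasDerivAt f f' a) (hmax : IsMaxOn f (Ico a b) a) : f' ≤ 0 := by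
  have hcone : b - a ∈ posTangentConeAt (Ico a b) a :=
    sub_mem_posTangentConeAt_of_openSegment_subset
      ((openSegment_eq_Ioo hab).subset.trans Ioo_subset_Ico_self)
  have := hmax.localize.hasFDerivWithinAt_nonpos hf.hasDerivWithinAt.hasFDerivWithinAt hcone
  simp only [ContinuousLinearMap.toSpanSingleton_apply, smul_eq_mul] at this
  exact nonpos_of_mul_nonpos_right this (sub_pos.2 hab)

section

variable {ι κ : Type*} [Fintype κ]

theorem hasDerivAt_sum_log_lineMap {h a : κ → ℝ} (hh : ∀ j, 0 < h j) :
    HasDerivAt (fun t => ∑ j, log ((1 - t) * h j + t * a j)) (∑ j, (a j - h j) / h j) 0 := by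
  refine HasDerivAt.fun_sum fun j _ => ?_
  have hline : HasDerivAt (fun t => (1 - t) * h j + t * a j) (a j - h j) 0 := by
    have := ((hasDerivAt_id (0 : ℝ)).mul_const (a j - h j)).const_add (h j)
    simp only [id, one_mul] at this
    exact this.congr_of_eventuallyEq (.of_forall fun t => by ring)
  simpa using hline.log (by simpa using (hh j).ne')

theorem sum_div_le_card_of_sum_log_lineMap_le {h a : κ → ℝ} (hh : ∀ j, 0 < h j)
    (hmax : ∀ t ∈ Ico (0 : ℝ) 1,
      ∑ j, log ((1 - t) * h j + t * a j) ≤ ∑ j, log (h j)) :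
    ∑ j, a j / h j ≤ Fintype.card κ := by
  have hderiv := (hasDerivAt_sum_log_lineMap (a := a) hh).nonpos_of_isMaxOn_Ico zero_lt_one
    fun t ht => by simpa using hmax t ht
  have hsplit : ∑ j, (a j - h j) / h j = ∑ j, a j / h j - Fintype.card κ := by
    simp [sub_div, div_self (hh _).ne', Finset.sum_sub_distrib]
  linarith

theorem sum_log_le_sum_log_one_div_of_dotProduct_le_one {h x : κ → ℝ} (hh : ∀ j, 0 < h j)
    (hx : ∀ j, 0 < x j) (hhx : h ⬝ᵥ x ≤ 1) :
    ∑ j, log (x j) ≤ ∑ j, log (1 / (Fintype.card κ * h j)) := by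
  set n : ℝ := (Fintype.card κ : ℝ)
  have hterm : ∀ j, log (x j) - log (1 / (n * h j)) ≤ n * (h j * x j) - 1 := by
    intro j
    have hn : 0 < n := Nat.cast_pos.2 (Fintype.card_pos_iff.2 ⟨j⟩)
    have hnh : 0 < n * h j := mul_pos hn (hh j)
    calc log (x j) - log (1 / (n * h j)) = log (n * h j * x j) := by
          rw [one_div, log_inv, log_mul hnh.ne' (hx j).ne']; ring
      _ ≤ n * h j * x j - 1 := log_le_sub_one_of_pos (mul_pos hnh (hx j))
      _ = n * (h j * x j) - 1 := by ring
  have hsum := Finset.sum_le_sum fun j (_ : j ∈ Finset.univ) => hterm j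
  rw [Finset.sum_sub_distrib, Finset.sum_sub_distrib, ← Finset.mul_sum] at hsum
  have : n * (h ⬝ᵥ x) ≤ n := mul_le_of_le_one_right (Nat.cast_nonneg _) hhx
  simp only [dotProduct, Finset.sum_const, Finset.card_univ, nsmul_eq_mul, mul_one] at hsum this
  linarith

theorem transpose_mulVec_dotProduct_le_one [Fintype ι] (A : Matrix ι κ ℝ) {lams : ι → ℝ}
    {x : κ → ℝ} (hlams_nonneg : ∀ i, 0 ≤ lams i) (hlams_sum : ∑ i, lams i = 1)
    (hx : ∀ i, (A *ᵥ x) i ≤ 1) :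
    Aᵀ *ᵥ lams ⬝ᵥ x ≤ 1 := by
  rw [mulVec_transpose, ← dotProduct_mulVec, ← hlams_sum]
  exact Finset.sum_le_sum fun i _ => mul_le_of_le_one_right (hlams_nonneg i) (hx i)

theorem mulVec_one_div_le_one (A : Matrix ι κ ℝ) {h : κ → ℝ} {c : ℝ} (hc : 0 ≤ c) {i : ι}
    (hi : ∑ j, A i j / h j ≤ c) : (A *ᵥ fun j => 1 / (c * h j)) i ≤ 1 := by
  have : (A *ᵥ fun j => 1 / (c * h j)) i = (∑ j, A i j / h j) / c := by
    simp only [mulVec, dotProduct, Finset.sum_div]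
    exact Finset.sum_congr rfl fun j _ => by field_simp
  rw [this]
  exact div_le_one_of_le₀ hi hc

theorem sum_div_transpose_mulVec_le_card [Fintype ι] [DecidableEq ι] (A : Matrix ι κ ℝ)
    (hA : ∀ i j, 0 ≤ A i j) {lams : ι → ℝ} (hlams_nonneg : ∀ i, 0 ≤ lams i)
    (hlams_sum : ∑ i, lams i = 1) (hlams_pos : ∀ j, 0 < (Aᵀ *ᵥ lams) j)
    (hmax : ∀ μ : ι → ℝ, (∀ i, 0 ≤ μ i) → ∑ i, μ i = 1 → (∀ j, 0 < (Aᵀ *ᵥ μ) j) →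
      ∑ j, log ((Aᵀ *ᵥ μ) j) ≤ ∑ j, log ((Aᵀ *ᵥ lams) j)) (i : ι) :
    ∑ j, A i j / (Aᵀ *ᵥ lams) j ≤ Fintype.card κ := by
  refine sum_div_le_card_of_sum_log_lineMap_le hlams_pos fun t ⟨ht0, ht1⟩ => ?_
  set μ : ι → ℝ := (1 - t) • lams + t • Pi.single i 1
  have hμ : ∀ j, (Aᵀ *ᵥ μ) j = (1 - t) * (Aᵀ *ᵥ lams) j + t * A i j := by
    intro j
    simp [μ, mulVec_add, mulVec_smul]
  have hμ_nonneg : 0 ≤ μ :=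
    add_nonneg (smul_nonneg (sub_nonneg.2 ht1.le) fun k => hlams_nonneg k)
      (smul_nonneg ht0 (Pi.single_nonneg.2 zero_le_one))
  have hμ_sum : ∑ k, μ k = 1 := by
    simp [μ, Finset.sum_add_distrib, ← Finset.mul_sum, hlams_sum]
  have hμ_pos : ∀ j, 0 < (Aᵀ *ᵥ μ) j := fun j => by
    rw [hμ]
    exact add_pos_of_pos_of_nonneg (mul_pos (sub_pos.2 ht1) (hlams_pos j))
      (mul_nonneg ht0 (hA i j))
  calc ∑ j, log ((1 - t) * (Aᵀ *ᵥ lams) j + t * A i j) = ∑ j, log ((Aᵀ *ᵥ μ) j) := by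
        simp only [hμ]
    _ ≤ _ := hmax μ hμ_nonneg hμ_sum hμ_pos

end

theorem dual_minimizer_gives_primal_maximizer_general {m n : ℕ}
    (A : Matrix (Fin m) (Fin n) ℝ) (hA : ∀ i j, 0 ≤ A i j)
    (lams : Fin m → ℝ) (hlams_nonneg : ∀ i, 0 ≤ lams i) (hlams_sum : ∑ i, lams i = 1)
    (hlams_pos : ∀ j, 0 < A.transpose.mulVec lams j)
    (hmin : ∀ μ : Fin m → ℝ, (∀ i, 0 ≤ μ i) → (∑ i, μ i = 1) →
      (∀ j, 0 < A.transpose.mulVec μ j) →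
      (-∑ j, Real.log (A.transpose.mulVec lams j) - n * Real.log n)
        ≤ -∑ j, Real.log (A.transpose.mulVec μ j) - n * Real.log n) :
    (∀ i, A.mulVec (fun j => 1 / ((n : ℝ) * A.transpose.mulVec lams j)) i ≤ 1) ∧
    (∀ x : Fin n → ℝ, (∀ j, 0 < x j) → (∀ i, A.mulVec x i ≤ 1) →
      ∑ j, Real.log (x j)
        ≤ ∑ j, Real.log (1 / ((n : ℝ) * A.transpose.mulVec lams j))) := by
  have hmax : ∀ μ : Fin m → ℝ, (∀ i, 0 ≤ μ i) → ∑ i, μ i = 1 → (∀ j, 0 < (Aᵀ *ᵥ μ) j) →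
      ∑ j, log ((Aᵀ *ᵥ μ) j) ≤ ∑ j, log ((Aᵀ *ᵥ lams) j) := fun μ h₀ h₁ hpos => by
    linarith [hmin μ h₀ h₁ hpos]
  refine ⟨fun i => mulVec_one_div_le_one A (Nat.cast_nonneg n) ?_, fun x hx hAx => ?_⟩
  · simpa using sum_div_transpose_mulVec_le_card A hA hlams_nonneg hlams_sum hlams_pos hmax i
  · simpa using sum_log_le_sum_log_one_div_of_dotProduct_le_one hlams_pos hx
      (transpose_mulVec_dotProduct_le_one A hlams_nonneg hlams_sum hAx)

/-- For a normalized nonnegative matrix `A`, if `λ*` minimizes the dual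
objective `g` over `{λ ∈ Δ_m : A^Tλ > 0}`, then the centroid point
`x* = c(A^Tλ*)` is feasible and maximizes `f(x) = ∑ log xᵢ` over the feasible
region of the 1-fair packing problem. -/
theorem dual_minimizer_gives_primal_maximizer {m n : ℕ}
    (A : Matrix (Fin m) (Fin n) ℝ) (hA : ∀ i j, 0 ≤ A i j)
    (hnorm : ∀ j, (∀ i, A i j ≤ 1) ∧ ∃ i, A i j = 1)
    (lams : Fin m → ℝ) (hlams_nonneg : ∀ i, 0 ≤ lams i) (hlams_sum : ∑ i, lams i = 1)
    (hlams_pos : ∀ j, 0 < A.transpose.mulVec lams j)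
    (hmin : ∀ μ : Fin m → ℝ, (∀ i, 0 ≤ μ i) → (∑ i, μ i = 1) →
      (∀ j, 0 < A.transpose.mulVec μ j) →
      (-∑ j, Real.log (A.transpose.mulVec lams j) - n * Real.log n)
        ≤ -∑ j, Real.log (A.transpose.mulVec μ j) - n * Real.log n) :
    (∀ i, A.mulVec (fun j => 1 / ((n : ℝ) * A.transpose.mulVec lams j)) i ≤ 1) ∧
    (∀ x : Fin n → ℝ, (∀ j, 0 < x j) → (∀ i, A.mulVec x i ≤ 1) →
      ∑ j, Real.log (x j)
        ≤ ∑ j, Real.log (1 / ((n : ℝ) * A.transpose.mulVec lams j))) :=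
  dual_minimizer_gives_primal_maximizer_general A hA lams hlams_nonneg hlams_sum hlams_pos hmin
end

section
/- Let A be a nonnegative m×n matrix. Then the set c(D⁺) = { x ∈ ℝ_{>0}^n : there exists λ ∈ Δ_m such that c(x)_i ≤ (A^Tλ)_i for all i ∈ [n] } is convex, where c(x)_i = 1/(n x_i). -/
/-! Since `t ↦ 1 / (n t)` is convex on `(0, ∞)`, the centroid map is coordinatewise convex on the
positive orthant. Hence if `λ` witnesses `x` and `μ` witnesses `y`, then `a λ + b μ` lies in the
simplex and `c(a x + b y) ≤ a c(x) + b c(y) ≤ Aᵀ(a λ + b μ)`, by linearity of `Aᵀ`. -/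

open Set

section

variable {𝕜 E F β : Type*} [Semiring 𝕜] [PartialOrder 𝕜] [AddCommMonoid E] [AddCommMonoid F]
  [AddCommMonoid β] [PartialOrder β]

theorem ConvexOn.pi {ι : Type*} [SMul 𝕜 E] [SMul 𝕜 β] {s : Set E} {f : E → ι → β}
    (hf : ∀ i, ConvexOn 𝕜 s fun x ↦ f x i) (hs : Convex 𝕜 s) : ConvexOn 𝕜 s f :=
  ⟨hs, fun _ hx _ hy _ _ ha hb hab i ↦ (hf i).2 hx hy ha hb hab⟩

theorem ConvexOn.convex_setOf_exists_le_linearMap [Module 𝕜 E] [Module 𝕜 F] [Module 𝕜 β]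
    [IsOrderedAddMonoid β] [PosSMulMono 𝕜 β] {s : Set E} {f : E → β}
    (hf : ConvexOn 𝕜 s f) {K : Set F} (hK : Convex 𝕜 K) (L : F →ₗ[𝕜] β) :
    Convex 𝕜 {x | x ∈ s ∧ ∃ y ∈ K, f x ≤ L y} := by
  rintro x ⟨hx, y, hy, hxy⟩ x' ⟨hx', y', hy', hxy'⟩ a b ha hb hab
  refine ⟨hf.1 hx hx' ha hb hab, a • y + b • y', hK hy hy' ha hb hab, ?_⟩
  calc f (a • x + b • x') ≤ a • f x + b • f x' := hf.2 hx hx' ha hb hab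
    _ ≤ a • L y + b • L y' :=
        add_le_add (smul_le_smul_of_nonneg_left hxy ha) (smul_le_smul_of_nonneg_left hxy' hb)
    _ = L (a • y + b • y') := by simp only [map_add, map_smul]

end

theorem convexOn_centroid (n : ℕ) :
    ConvexOn ℝ {x : Fin n → ℝ | ∀ i, 0 < x i} fun x i ↦ 1 / ((n : ℝ) * x i) := by
  have hpos : Convex ℝ {x : Fin n → ℝ | ∀ i, 0 < x i} := by
    simpa only [Set.pi, mem_univ, true_imp_iff, mem_Ioi] using
      convex_pi (s := univ) fun _ _ ↦ convex_Ioi (0 : ℝ)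
  refine ConvexOn.pi (fun i ↦ ?_) hpos
  have hinv := ((convexOn_zpow (𝕜 := ℝ) (-1)).comp_linearMap
    (LinearMap.proj (R := ℝ) (φ := fun _ : Fin n ↦ ℝ) i)).subset
      (s := {x | ∀ j, 0 < x j}) (fun x hx ↦ hx i) hpos
  refine (hinv.smul (inv_nonneg.2 n.cast_nonneg)).congr fun x _ ↦ ?_
  simp only [Function.comp_apply, LinearMap.proj_apply, smul_eq_mul, one_div, mul_inv,
    zpow_neg_one]

theorem centroid_image_of_dominated_constraints_convex_general {m n : ℕ}
    (A : Matrix (Fin m) (Fin n) ℝ) :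
    Convex ℝ {x : Fin n → ℝ | (∀ i, 0 < x i) ∧
      ∃ lam : Fin m → ℝ, (∀ i, 0 ≤ lam i) ∧ (∑ i, lam i = 1) ∧
        ∀ i, 1 / ((n : ℝ) * x i) ≤ A.transpose.mulVec lam i} := by
  simpa only [stdSimplex, mem_ofPred_eq, and_assoc, Pi.le_def, Matrix.mulVecLin_apply] using
    (convexOn_centroid n).convex_setOf_exists_le_linearMap (convex_stdSimplex ℝ (Fin m))
      A.transpose.mulVecLin

/-- The image `c(D⁺)` of the set of feasible positive constraints under the
centroid map is convex. -/
theorem centroid_image_of_dominated_constraints_convex {m n : ℕ}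
    (A : Matrix (Fin m) (Fin n) ℝ) (hA : ∀ i j, 0 ≤ A i j) :
    Convex ℝ {x : Fin n → ℝ | (∀ i, 0 < x i) ∧
      ∃ lam : Fin m → ℝ, (∀ i, 0 ≤ lam i) ∧ (∑ i, lam i = 1) ∧
        ∀ i, 1 / ((n : ℝ) * x i) ≤ A.transpose.mulVec lam i} :=
  centroid_image_of_dominated_constraints_convex_general A
end

section
/- Let σ, τ > 0, write W⁺ = max{σ,τ} and W⁻ = min{σ,τ}, let δ ∈ (0, 2W⁻], set η = δ/(4W⁻), and let s = 1 if τ ≥ σ and s = −1 otherwise. Let ℓ^{(1)}, …, ℓ^{(K)} ∈ [−σ, τ]^{m̃} be arbitrary loss vectors with K a natural number satisfying K ≥ 8στ log(m̃)/δ². Define weights Λ^{(1)} = 1_{m̃} and Λ^{(k+1)} = Λ^{(k)} ⊙ (1_{m̃} − (η/W⁺) ℓ^{(k)}), where ⊙ is the entrywise product. Then for every u ∈ Δ_{m̃}: (1/K) Σ_{k=1}^{K} ⟨ℓ^{(k)}, Λ^{(k)}/‖Λ^{(k)}‖₁⟩ ≤ δ + ((1 + sη)/K) Σ_{k=1}^{K}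 ⟨ℓ^{(k)}, u⟩. -/
/-! The potential `Φₖ = ∑ᵢ Λₖ(i)` satisfies `Φₖ₊₁ = Φₖ (1 - ε qₖ)`, where `ε = η / W⁺` and `qₖ` is the
loss of the normalized weights, so `log Φ_K ≤ log m̃ - ε ∑ₖ qₖ`. On the other hand
`log Φ_K ≥ ∑ᵢ uᵢ log Λ_K(i)` by concavity of `log`, and each factor of `Λ_K(i)` satisfies
`log (1 - εℓ) ≥ -εℓ - (εℓ)² ≥ -ε (1 + sη) ℓ - 2εηW⁻`, because `ε|ℓ| ≤ η` and `|ℓ| ≤ sℓ + 2W⁻` on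
`[-σ, τ]`. Comparing the two bounds and dividing by `εK` gives the claim; the lower bound on `K`
is exactly what makes `log m̃ / (εK) ≤ δ/2`. -/

open Finset Real

lemma Real.neg_sub_sq_le_log_one_sub {x : ℝ} (h : |x| ≤ 1 / 2) : -x - x ^ 2 ≤ log (1 - x) := by
  obtain ⟨hx₁, hx₂⟩ := abs_le.mp h
  rw [le_log_iff_exp_le (by linarith)]
  have hexp : exp (-x - x ^ 2) * exp (x + x ^ 2) = 1 := by rw [← exp_add]; ring_nf; exact exp_zero
  have hpos := exp_pos (-x - x ^ 2)
  rcases le_or_gt 0 x with hx | hx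
  · have hq := quadratic_le_exp_of_nonneg (by positivity : 0 ≤ x + x ^ 2)
    have : 1 ≤ (1 - x) * (1 + (x + x ^ 2) + (x + x ^ 2) ^ 2 / 2) := by nlinarith
    nlinarith [mul_le_mul_of_nonneg_left hq hpos.le]
  · have hl := add_one_le_exp (x + x ^ 2)
    have : 1 ≤ (1 - x) * (x + x ^ 2 + 1) := by nlinarith
    nlinarith [mul_le_mul_of_nonneg_left hl hpos.le]

lemma Real.sum_mul_log_le_log_sum {ι : Type*} {s : Finset ι} {u w : ι → ℝ}
    (hu₀ : ∀ i ∈ s, 0 ≤ u i) (hu₁ : ∑ i ∈ s, u i = 1) (hw : ∀ i ∈ s, 0 < w i) :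
    ∑ i ∈ s, u i * log (w i) ≤ log (∑ i ∈ s, w i) := by
  have hmean : 0 < ∑ i ∈ s, u i * w i := (convex_Ioi (0 : ℝ)).sum_mem hu₀ hu₁ hw
  calc ∑ i ∈ s, u i * log (w i) ≤ log (∑ i ∈ s, u i * w i) :=
        strictConcaveOn_log_Ioi.concaveOn.le_map_sum hu₀ hu₁ hw
    _ ≤ log (∑ i ∈ s, w i) := by
        refine log_le_log hmean (sum_le_sum fun i hi => ?_)
        have hu : u i ≤ 1 := hu₁ ▸ single_le_sum hu₀ hi
        nlinarith [hw i hi]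

lemma Real.log_one_sub_mul_ge {ε η s c x : ℝ} (hε : 0 ≤ ε) (hη : η ≤ 1 / 2)
    (hx : ε * |x| ≤ η) (hxc : |x| ≤ s * x + c) :
    -(ε * (1 + s * η)) * x - ε * η * c ≤ log (1 - ε * x) := by
  have hlog := neg_sub_sq_le_log_one_sub (x := ε * x) (by rw [abs_mul, abs_of_nonneg hε]; linarith)
  have hεx : 0 ≤ ε * |x| := by positivity
  have hsq : (ε * x) ^ 2 ≤ ε * η * (s * x + c) :=
    calc (ε * x) ^ 2 = (ε * |x|) * (ε * |x|) := by rw [← sq, mul_pow, mul_pow, sq_abs]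
      _ ≤ (ε * η) * |x| := by nlinarith
      _ ≤ ε * η * (s * x + c) := by gcongr; exact mul_nonneg hε (hεx.trans hx)
  nlinarith

lemma abs_le_sign_mul_add_two_min {σ τ s x : ℝ} (hσ : 0 ≤ σ) (hτ : 0 ≤ τ)
    (hx : x ∈ Set.Icc (-σ) τ) (hs : s = if σ ≤ τ then 1 else -1) :
    |x| ≤ s * x + 2 * min σ τ := by
  obtain ⟨hx₁, hx₂⟩ := hx
  rcases le_or_gt σ τ with h | h
  · rw [hs, if_pos h, min_eq_left h, abs_le]; constructor <;> linarith
  · rw [hs, if_neg h.not_ge, min_eq_right h.le, abs_le]; constructor <;> linarith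

lemma abs_le_max_of_mem_Icc {σ τ x : ℝ} (hx : x ∈ Set.Icc (-σ) τ) : |x| ≤ max σ τ :=
  abs_le.mpr ⟨by linarith [hx.1, le_max_left σ τ], hx.2.trans (le_max_right σ τ)⟩

lemma div_mul_le_of_le {a b x : ℝ} (ha : 0 ≤ a) (hb : 0 < b) (hx : x ≤ b) : a / b * x ≤ a := by
  rw [div_mul_eq_mul_div, div_le_iff₀ hb]
  gcongr

lemma log_le_rate_mul_rounds {σ τ δ m K : ℝ} (hσ : 0 < σ) (hτ : 0 < τ) (hδ : 0 < δ)
    (hK : 8 * σ * τ * log m / δ ^ 2 ≤ K) : log m ≤ δ / (4 * min σ τ) / max σ τ * (δ / 2 * K) := by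
  have hrate : δ / (4 * min σ τ) / max σ τ = δ / (4 * (σ * τ)) := by
    rw [← min_mul_max σ τ, div_div, mul_assoc]
  rw [div_le_iff₀ (by positivity)] at hK
  rw [hrate, div_mul_eq_mul_div, le_div_iff₀ (by positivity)]
  nlinarith

namespace MultiplicativeWeights

variable {ι : Type*} {ε η : ℝ} {ℓ Λ : ℕ → ι → ℝ} {n : ℕ}

lemma weight_eq_prod (hΛ₀ : Λ 0 = fun _ => 1)
    (hΛ : ∀ k, Λ (k + 1) = fun i => Λ k i * (1 - ε * ℓ k i)) (k : ℕ) (i : ι) :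
    Λ k i = ∏ j ∈ range k, (1 - ε * ℓ j i) := by
  induction k with
  | zero => simp [hΛ₀]
  | succ k ih => simp only [hΛ, prod_range_succ, ih]

lemma one_sub_mul_pos (hε : 0 ≤ ε) (hη : η < 1) {x : ℝ} (hx : ε * |x| ≤ η) : 0 < 1 - ε * x := by
  have := le_abs_self (ε * x)
  rw [abs_mul, abs_of_nonneg hε] at this
  linarith

lemma weight_pos (hΛ₀ : Λ 0 = fun _ => 1)
    (hΛ : ∀ k, Λ (k + 1) = fun i => Λ k i * (1 - ε * ℓ k i)) (hε : 0 ≤ ε) (hη : η < 1)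
    (hℓ : ∀ k < n, ∀ i, ε * |ℓ k i| ≤ η) {k : ℕ} (hk : k ≤ n) (i : ι) : 0 < Λ k i := by
  rw [weight_eq_prod hΛ₀ hΛ]
  exact prod_pos fun j hj => one_sub_mul_pos hε hη (hℓ j ((mem_range.mp hj).trans_le hk) i)

variable [Fintype ι]

/-- The potential `∑ i, Λ k i` is multiplied by `1 - ε q ≤ exp (-ε q)`, where `q` is the loss of
the normalized weights. -/
lemma log_sum_weight_succ_le (hΛ : ∀ k, Λ (k + 1) = fun i => Λ k i * (1 - ε * ℓ k i))
    {k : ℕ} (hpos : 0 < ∑ i, Λ k i) (hpos' : 0 < ∑ i, Λ (k + 1) i) :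
    log (∑ i, Λ (k + 1) i) ≤ log (∑ i, Λ k i) - ε * ∑ i, ℓ k i * (Λ k i / ∑ j, Λ k j) := by
  set Φ := ∑ i, Λ k i
  have hsum : ∑ i, Λ (k + 1) i = Φ - ε * ∑ i, ℓ k i * Λ k i := by
    simp only [Φ, hΛ, mul_sum, ← sum_sub_distrib]
    exact sum_congr rfl fun i _ => by ring
  have hratio : (∑ i, Λ (k + 1) i) / Φ - 1 = -ε * ∑ i, ℓ k i * (Λ k i / Φ) := by
    simp only [hsum, mul_div_assoc', ← sum_div]
    field_simp
    ring
  have := log_le_sub_one_of_pos (div_pos hpos' hpos)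
  rw [log_div hpos'.ne' hpos.ne', hratio] at this
  linarith

lemma log_sum_weight_le [Nonempty ι] (hΛ₀ : Λ 0 = fun _ => 1)
    (hΛ : ∀ k, Λ (k + 1) = fun i => Λ k i * (1 - ε * ℓ k i)) (hpos : ∀ k ≤ n, ∀ i, 0 < Λ k i) :
    log (∑ i, Λ n i) ≤
      log (Fintype.card ι) - ε * ∑ k ∈ range n, ∑ i, ℓ k i * (Λ k i / ∑ j, Λ k j) := by
  have hΦ : ∀ k ≤ n, 0 < ∑ i, Λ k i := fun k hk => sum_pos (fun i _ => hpos k hk i) univ_nonempty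
  have hstep := sum_le_sum fun k (hk : k ∈ range n) =>
    sub_le_iff_le_add.mpr ((log_sum_weight_succ_le hΛ (hΦ k (mem_range.mp hk).le)
      (hΦ (k + 1) (mem_range.mp hk))).trans_eq (sub_eq_neg_add _ _))
  rw [sum_range_sub (fun k => log (∑ i, Λ k i)), sum_neg_distrib, ← mul_sum] at hstep
  simp only [hΛ₀, sum_const, card_univ, nsmul_eq_mul, mul_one] at hstep
  linarith

theorem sum_loss_le [Nonempty ι] {s c : ℝ} (hε : 0 ≤ ε) (hη : η ≤ 1 / 2)
    (hΛ₀ : Λ 0 = fun _ => 1) (hΛ : ∀ k, Λ (k + 1) = fun i => Λ k i * (1 - ε * ℓ k i))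
    (hℓη : ∀ k < n, ∀ i, ε * |ℓ k i| ≤ η) (hℓc : ∀ k < n, ∀ i, |ℓ k i| ≤ s * ℓ k i + c)
    {u : ι → ℝ} (hu₀ : ∀ i, 0 ≤ u i) (hu₁ : ∑ i, u i = 1) :
    ε * ∑ k ∈ range n, ∑ i, ℓ k i * (Λ k i / ∑ j, |Λ k j|) ≤
      log (Fintype.card ι) + ε * (1 + s * η) * ∑ k ∈ range n, ∑ i, ℓ k i * u i + ε * η * c * n := by
  have hpos : ∀ k ≤ n, ∀ i, 0 < Λ k i := fun k hk =>
    weight_pos hΛ₀ hΛ hε (by linarith) hℓη hk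
  have hnorm : ∀ k ∈ range n, ∑ j, |Λ k j| = ∑ j, Λ k j := fun k hk =>
    sum_congr rfl fun j _ => abs_of_pos (hpos k (mem_range.mp hk).le j)
  rw [sum_congr rfl fun k hk => by rw [hnorm k hk]]
  have hlog : ∀ i, ∑ k ∈ range n, (-(ε * (1 + s * η)) * ℓ k i - ε * η * c) ≤ log (Λ n i) := by
    intro i
    have hfac : ∀ k ∈ range n, 0 < 1 - ε * ℓ k i := fun k hk =>
      one_sub_mul_pos hε (by linarith) (hℓη k (mem_range.mp hk) i)
    rw [weight_eq_prod hΛ₀ hΛ, log_prod fun k hk => (hfac k hk).ne']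
    exact sum_le_sum fun k hk =>
      log_one_sub_mul_ge hε hη (hℓη k (mem_range.mp hk) i) (hℓc k (mem_range.mp hk) i)
  have hmix : -(ε * (1 + s * η)) * ∑ k ∈ range n, ∑ i, ℓ k i * u i - ε * η * c * n =
      ∑ i, u i * ∑ k ∈ range n, (-(ε * (1 + s * η)) * ℓ k i - ε * η * c) := by
    simp only [mul_sum, mul_sub, sum_sub_distrib, sum_const, card_range, nsmul_eq_mul]
    rw [sum_comm, ← sum_mul, hu₁]
    simp only [mul_left_comm (u _), mul_comm (ℓ _ _) (u _)]
    ring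
  have hjensen := sum_mul_log_le_log_sum (fun i _ => hu₀ i) hu₁ fun i _ => hpos n le_rfl i
  have hpot := log_sum_weight_le hΛ₀ hΛ hpos
  have := sum_le_sum fun i (_ : i ∈ univ) => mul_le_mul_of_nonneg_left (hlog i) (hu₀ i)
  linarith

end MultiplicativeWeights

/-- Multiplicative Weights lemma with additive and multiplicative guarantee:
for losses `ℓ^{(k)} ∈ [-σ, τ]^m̃` and the multiplicative weights update with
learning rate `η = δ/(4 min{σ,τ})`, after `K ≥ 8στ log(m̃)/δ²` rounds the
average realized loss is bounded by `δ` plus `(1 + s·η)` times the average loss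
of any fixed distribution `u`. -/
theorem multiplicative_weights {mt : ℕ}
    (σ τ δ : ℝ) (hσ : 0 < σ) (hτ : 0 < τ)
    (hδ0 : 0 < δ) (hδ : δ ≤ 2 * min σ τ)
    (η : ℝ) (hη : η = δ / (4 * min σ τ))
    (s : ℝ) (hs : s = if σ ≤ τ then 1 else -1)
    (K : ℕ) (hK : 8 * σ * τ * Real.log mt / δ ^ 2 ≤ K)
    (ℓ : ℕ → Fin mt → ℝ) (hℓ : ∀ k < K, ∀ i, ℓ k i ∈ Set.Icc (-σ) τ)
    (Λ : ℕ → Fin mt → ℝ) (hΛ0 : Λ 0 = fun _ => 1)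
    (hΛ : ∀ k, Λ (k + 1) = fun i => Λ k i * (1 - (η / max σ τ) * ℓ k i)) :
    ∀ u : Fin mt → ℝ, (∀ i, 0 ≤ u i) → (∑ i, u i = 1) →
      (1 / K) * ∑ k ∈ Finset.range K, ∑ i, ℓ k i * (Λ k i / ∑ i', |Λ k i'|)
        ≤ δ + ((1 + s * η) / K) * ∑ k ∈ Finset.range K, ∑ i, ℓ k i * u i := by
  intro u hu₀ hu₁
  have hne : Nonempty (Fin mt) := by
    by_contra h
    simp [not_nonempty_iff.mp h] at hu₁
  rcases K.eq_zero_or_pos with rfl | hK₀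
  · simpa using hδ0.le
  have hmin : 0 < min σ τ := lt_min hσ hτ
  have hmax : 0 < max σ τ := hmin.trans_le min_le_max
  have hη₀ : 0 < η := by rw [hη]; positivity
  have hη_le : η ≤ 1 / 2 := by rw [hη, div_le_iff₀ (by positivity)]; linarith
  have hε : 0 < η / max σ τ := by positivity
  have hℓη : ∀ k < K, ∀ i, η / max σ τ * |ℓ k i| ≤ η := fun k hk i =>
    div_mul_le_of_le hη₀.le hmax (abs_le_max_of_mem_Icc (hℓ k hk i))
  have hbound := MultiplicativeWeights.sum_loss_le hε.le hη_le hΛ0 hΛ hℓη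
    (fun k hk i => abs_le_sign_mul_add_two_min hσ.le hτ.le (hℓ k hk i) hs) hu₀ hu₁
  have hlog := log_le_rate_mul_rounds hσ hτ hδ0 hK
  rw [← hη] at hlog
  have hηmin : η * (2 * min σ τ) = δ / 2 := by rw [hη]; field_simp; ring
  simp only [Fintype.card_fin] at hbound
  have hsum : ∑ k ∈ range K, ∑ i, ℓ k i * (Λ k i / ∑ i', |Λ k i'|) ≤
      δ * K + (1 + s * η) * ∑ k ∈ range K, ∑ i, ℓ k i * u i := by
    rw [mul_assoc _ η, hηmin] at hbound
    refine le_of_mul_le_mul_left ?_ hε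
    linarith
  calc _ ≤ 1 / (K : ℝ) * (δ * K + (1 + s * η) * ∑ k ∈ range K, ∑ i, ℓ k i * u i) := by gcongr
    _ = _ := by field_simp
end

section
/- Let v ∈ ℝ_{>0}^n and δ' > 0 (with δ' playing the role of ωδ). If x ∈ L_{δ'}(v), i.e., x ∈ ℝ_{>0}^n satisfies Σ_{i=1}^n v_i/(n x_i) ≤ 1 and Σ_{i=1}^n x_i/(n v_i) ≤ 1 + δ', then for every coordinate i: max(0, 1 − √(δ' n))·v_i ≤ x_i ≤ (1 + √(δ' n) + δ' n)·v_i. -/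
/-!
Writing `aᵢ = xᵢ / vᵢ`, the two lens inequalities add up to `∑ (aᵢ + aᵢ⁻¹ - 2) ≤ δ' n`.
Every summand `a + a⁻¹ - 2 = (a - 1)² / a` is nonnegative, so each one alone satisfies
`(aᵢ - 1)² ≤ δ' n · aᵢ`, and solving this quadratic inequality bounds `aᵢ` on both sides.
-/

open Finset

lemma add_inv_sub_two_eq_sq_div {a : ℝ} (ha : a ≠ 0) : a + a⁻¹ - 2 = (a - 1) ^ 2 / a := by
  field_simp
  ring

lemma sq_sub_one_le_of_sum_add_inv_le {ι : Type*} [Fintype ι] {a : ι → ℝ} (ha : ∀ j, 0 < a j)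
    {c : ℝ} (h : ∑ j, (a j + (a j)⁻¹) ≤ 2 * Fintype.card ι + c) (i : ι) :
    (a i - 1) ^ 2 ≤ c * a i := by
  have hsum : ∑ j, (a j + (a j)⁻¹ - 2) ≤ c := by
    rw [sum_sub_distrib, sum_const, card_univ, nsmul_eq_mul]
    linarith
  have hsingle : (a i - 1) ^ 2 / a i ≤ c :=
    calc (a i - 1) ^ 2 / a i = a i + (a i)⁻¹ - 2 := (add_inv_sub_two_eq_sq_div (ha i).ne').symm
      _ ≤ ∑ j, (a j + (a j)⁻¹ - 2) := by
        refine single_le_sum (f := fun j => a j + (a j)⁻¹ - 2) (fun j _ => ?_) (mem_univ i)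
        rw [add_inv_sub_two_eq_sq_div (ha j).ne']
        exact div_nonneg (sq_nonneg _) (ha j).le
      _ ≤ c := hsum
  rwa [div_le_iff₀ (ha i)] at hsingle

lemma bounds_of_sq_sub_one_le {p a : ℝ} (hp : 0 < p) (h : (p - 1) ^ 2 ≤ a * p) :
    max 0 (1 - √a) ≤ p ∧ p ≤ 1 + √a + a := by
  have ha : 0 ≤ a := nonneg_of_mul_nonneg_left ((sq_nonneg _).trans h) hp
  set s := √a
  have hs : 0 ≤ s := Real.sqrt_nonneg a
  have hs2 : s ^ 2 = a := Real.sq_sqrt ha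
  rw [← hs2] at h ⊢
  refine ⟨max_le hp.le ?_, ?_⟩
  · by_contra! hlt
    nlinarith
  · by_contra! hlt
    nlinarith [mul_nonneg hs (sq_nonneg s)]

theorem lens_bounding_box_general {n : ℕ}
    (v x : Fin n → ℝ) (δ' : ℝ)
    (hv : ∀ i, 0 < v i) (hx : ∀ i, 0 < x i)
    (h1 : ∑ i, v i / ((n : ℝ) * x i) ≤ 1)
    (h2 : ∑ i, x i / ((n : ℝ) * v i) ≤ 1 + δ') :
    ∀ i, max 0 (1 - Real.sqrt (δ' * n)) * v i ≤ x i ∧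
         x i ≤ (1 + Real.sqrt (δ' * n) + δ' * n) * v i := by
  intro i
  have hn : (0 : ℝ) < n := by exact_mod_cast i.pos
  have hratio : ∀ j, 0 < x j / v j := fun j => div_pos (hx j) (hv j)
  have hsum : ∑ j, (x j / v j + (x j / v j)⁻¹) =
      n * (∑ j, x j / (n * v j) + ∑ j, v j / (n * x j)) := by
    rw [mul_add, mul_sum, mul_sum, ← sum_add_distrib]
    refine sum_congr rfl fun j _ => ?_
    field_simp [(hx j).ne', (hv j).ne']
  have hlens : ∑ j, (x j / v j + (x j / v j)⁻¹) ≤ 2 * Fintype.card (Fin n) + δ' * n := by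
    rw [hsum, Fintype.card_fin]
    nlinarith [mul_le_mul_of_nonneg_left (add_le_add h2 h1) hn.le]
  obtain ⟨hlow, hup⟩ :=
    bounds_of_sq_sub_one_le (hratio i) (sq_sub_one_le_of_sum_add_inv_le hratio hlens i)
  exact ⟨(le_div_iff₀ (hv i)).mp hlow, (div_le_iff₀ (hv i)).mp hup⟩

/-- Bounding box of the lens: any point `x` of the lens `L_{δ'}(v)` satisfies
`max(0, 1 - √(δ'n))·vᵢ ≤ xᵢ ≤ (1 + √(δ'n) + δ'n)·vᵢ` in every coordinate. -/
theorem lens_bounding_box {n : ℕ}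
    (v x : Fin n → ℝ) (δ' : ℝ) (hδ' : 0 < δ')
    (hv : ∀ i, 0 < v i) (hx : ∀ i, 0 < x i)
    (h1 : ∑ i, v i / ((n : ℝ) * x i) ≤ 1)
    (h2 : ∑ i, x i / ((n : ℝ) * v i) ≤ 1 + δ') :
    ∀ i, max 0 (1 - Real.sqrt (δ' * n)) * v i ≤ x i ∧
         x i ≤ (1 + Real.sqrt (δ' * n) + δ' * n) * v i :=
  lens_bounding_box_general v x δ' hv hx h1 h2
end

section
/- Let s, q ∈ ℝ_{>0}^n, δ > 0 and ω ∈ (1, 2], and suppose ⟨s, c(q)⟩ > (1+ωδ)/(1+δ) and ⟨q, c(s)⟩ > 1. Define π_s(μ) = ⟨s, c((1−μ)s + μq)⟩ and π_q(μ) = ⟨q, c((1−μ)s + μq)⟩ for μ ∈ (0,1). Then: (i) (1−μ)π_s(μ) + μπ_q(μ) = 1 for all μ ∈ (0,1); (ii) there exists μ* ∈ (0,1) with π_s(μ*) ∈ (1, (1+ωδ)/(1+δ)), and consequently the point o = c((1−μ*)s + μ*q) satisfies ⟨q, o⟩ < 1 and ⟨(1+δ)s, o⟩ < 1 + ωδ;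 (iii) the set {μ ∈ (0,1) : π_s(μ) ∈ (1, (1+ωδ)/(1+δ))} contains an interval of length at least ((1+ωδ)/(1+δ) − 1) / ( n·((1+ωδ)/(1+δ))² ). -/
open scoped BigOperators

private lemma obl_pos {n : ℕ} (s q : Fin n → ℝ) (hs : ∀ i, 0 < s i) (hq : ∀ i, 0 < q i)
    {μ : ℝ} (h0 : 0 ≤ μ) (h1 : μ ≤ 1) (i : Fin n) : 0 < (1 - μ) * s i + μ * q i := by
  rcases eq_or_lt_of_le h1 with h | h
  · subst h; simpa using hq i
  · have h2 := hs i; have h3 := hq i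
    have : 0 < (1 - μ) * s i := mul_pos (by linarith) h2
    nlinarith [mul_nonneg h0 h3.le]

private lemma obl_term {nr si qi e d t : ℝ} (hn : 0 < nr) (hsi : 0 < si) (hqi : 0 < qi)
    (he : 0 < e) (hd : 0 < d) (ht : 0 ≤ t) (hed : e - d = t * (si - qi)) :
    si * (1 / (nr * d)) ≤ si * (1 / (nr * e)) + t * (nr * (si * (1 / (nr * e)) * (si * (1 / (nr * d))))) := by
  have hed' : e ≤ d + t * si := by nlinarith [mul_nonneg ht hqi.le]
  field_simp
  rw [mul_comm si t]
  have h2 : si * e ≤ si * d + t * si * si := by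
    nlinarith [mul_nonneg (mul_nonneg ht hqi.le) hsi.le]
  nlinarith [mul_le_mul_of_nonneg_left h2 (show (0:ℝ) ≤ nr^3 * e * d by positivity)]

private lemma obl_key {n : ℕ} (s q : Fin n → ℝ) (hs : ∀ i, 0 < s i) (hq : ∀ i, 0 < q i)
    {μ₀ μ : ℝ} (h0 : 0 ≤ μ₀) (h01 : μ₀ ≤ μ) (h1 : μ ≤ 1) :
    (∑ i, s i * (1 / ((n : ℝ) * ((1 - μ) * s i + μ * q i)))) ≤
      (∑ i, s i * (1 / ((n : ℝ) * ((1 - μ₀) * s i + μ₀ * q i))))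
      + (μ - μ₀) * (n : ℝ) * (∑ i, s i * (1 / ((n : ℝ) * ((1 - μ₀) * s i + μ₀ * q i))))
        * (∑ i, s i * (1 / ((n : ℝ) * ((1 - μ) * s i + μ * q i)))) := by
  rcases Nat.eq_zero_or_pos n with hn | hn
  · subst hn; simp
  have hn' : (0 : ℝ) < n := by exact_mod_cast hn
  set a : Fin n → ℝ := fun i => s i * (1 / ((n : ℝ) * ((1 - μ₀) * s i + μ₀ * q i))) with ha
  set b : Fin n → ℝ := fun i => s i * (1 / ((n : ℝ) * ((1 - μ) * s i + μ * q i))) with hb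
  have hapos : ∀ i, 0 < a i := by
    intro i
    have he := obl_pos s q hs hq h0 (h01.trans h1) i
    show 0 < s i * (1 / ((n : ℝ) * ((1 - μ₀) * s i + μ₀ * q i)))
    exact mul_pos (hs i) (by rw [one_div]; exact inv_pos.2 (mul_pos hn' he))
  have hbpos : ∀ i, 0 < b i := by
    intro i
    have hd := obl_pos s q hs hq (h0.trans h01) h1 i
    show 0 < s i * (1 / ((n : ℝ) * ((1 - μ) * s i + μ * q i)))
    exact mul_pos (hs i) (by rw [one_div]; exact inv_pos.2 (mul_pos hn' hd))
  have hab : ∀ i, b i ≤ a i + (μ - μ₀) * ((n : ℝ) * (a i * b i)) := by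
    intro i
    have he := obl_pos s q hs hq h0 (h01.trans h1) i
    have hd := obl_pos s q hs hq (h0.trans h01) h1 i
    show s i * (1 / ((n : ℝ) * ((1 - μ) * s i + μ * q i))) ≤
      s i * (1 / ((n : ℝ) * ((1 - μ₀) * s i + μ₀ * q i)))
      + (μ - μ₀) * ((n : ℝ) * (s i * (1 / ((n : ℝ) * ((1 - μ₀) * s i + μ₀ * q i)))
          * (s i * (1 / ((n : ℝ) * ((1 - μ) * s i + μ * q i))))))
    exact obl_term hn' (hs i) (hq i) he hd (by linarith) (by ring)
  have hsum1 : ∑ i, a i * b i ≤ (∑ i, a i) * (∑ i, b i) := by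
    calc ∑ i, a i * b i ≤ ∑ i, a i * (∑ j, b j) :=
          Finset.sum_le_sum fun i _ => mul_le_mul_of_nonneg_left
            (Finset.single_le_sum (fun j _ => (hbpos j).le) (Finset.mem_univ i)) (hapos i).le
      _ = (∑ i, a i) * (∑ i, b i) := by rw [← Finset.sum_mul]
  have ht : 0 ≤ (μ - μ₀) * (n : ℝ) := mul_nonneg (by linarith) hn'.le
  calc (∑ i, b i) ≤ ∑ i, (a i + (μ - μ₀) * ((n : ℝ) * (a i * b i))) :=
        Finset.sum_le_sum fun i _ => hab i
    _ = (∑ i, a i) + (μ - μ₀) * (n : ℝ) * (∑ i, a i * b i) := by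
        rw [Finset.sum_add_distrib, ← Finset.mul_sum, ← Finset.mul_sum]; ring
    _ ≤ (∑ i, a i) + (μ - μ₀) * (n : ℝ) * ((∑ i, a i) * (∑ i, b i)) := by
        exact add_le_add le_rfl (mul_le_mul_of_nonneg_left hsum1 ht)
    _ = (∑ i, a i) + (μ - μ₀) * (n : ℝ) * (∑ i, a i) * (∑ i, b i) := by ring

private lemma obl_sum_pos {n : ℕ} (s q : Fin n → ℝ) (hs : ∀ i, 0 < s i) (hq : ∀ i, 0 < q i)
    (hn : 0 < n) {μ : ℝ} (h0 : 0 ≤ μ) (h1 : μ ≤ 1) :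
    0 < ∑ i, s i * (1 / ((n : ℝ) * ((1 - μ) * s i + μ * q i))) := by
  have hn' : (0 : ℝ) < n := by exact_mod_cast hn
  haveI : Nonempty (Fin n) := Fin.pos_iff_nonempty.mp hn
  refine Finset.sum_pos (fun i _ => ?_) Finset.univ_nonempty
  have hd := obl_pos s q hs hq h0 h1 i
  exact mul_pos (hs i) (by rw [one_div]; exact inv_pos.2 (mul_pos hn' hd))

private lemma obl_P0 {n : ℕ} (s q : Fin n → ℝ) (hs : ∀ i, 0 < s i) (hn : 0 < n) :
    (∑ i, s i * (1 / ((n : ℝ) * ((1 - 0) * s i + 0 * q i)))) = 1 := by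
  have hn' : (0 : ℝ) < n := by exact_mod_cast hn
  have : ∀ i, s i * (1 / ((n : ℝ) * ((1 - 0) * s i + 0 * q i))) = 1 / n := by
    intro i
    have := (hs i).ne'
    field_simp
    ring_nf; exact mul_inv_cancel₀ this
  rw [Finset.sum_congr rfl fun i _ => this i]
  rw [Finset.sum_const, Finset.card_univ, Fintype.card_fin, nsmul_eq_mul]
  field_simp

private lemma obl_arith {nr K L x P0 t : ℝ} (hn : 0 < nr) (hK1 : 1 < K)
    (hLdef : L = (K - 1) / (nr * K ^ 2))
    (hkey : x ≤ P0 + t * nr * P0 * x) (hP0le : P0 ≤ 1)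
    (hxpos : 0 < x) (ht0 : 0 ≤ t) (htL : t < L) : x < K := by
  have hK0 : (0 : ℝ) < K := lt_trans one_pos hK1
  have hK2 : (0 : ℝ) < K ^ 2 := by positivity
  have h1 : x * (1 - t * nr) ≤ 1 := by
    nlinarith [mul_nonneg (sub_nonneg.2 hP0le) (mul_nonneg (mul_nonneg ht0 hn.le) hxpos.le)]
  have h2 : t * nr * K ^ 2 < K - 1 := by
    have h2a : t * nr < L * nr := mul_lt_mul_of_pos_right htL hn
    have h2b : L * nr = (K - 1) / K ^ 2 := by
      rw [hLdef]; field_simp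
    rw [h2b] at h2a
    exact (lt_div_iff₀ hK2).mp h2a
  by_contra hx
  push_neg at hx
  have htn1 : t * nr < 1 := by nlinarith [hK2, sq_nonneg (K - 1), hK0]
  have h5 : K * (1 - t * nr) ≤ x * (1 - t * nr) :=
    mul_le_mul_of_nonneg_right hx (by linarith)
  nlinarith [mul_nonneg (mul_nonneg ht0 hn.le) (by nlinarith : (0:ℝ) ≤ K ^ 2 - K)]

private lemma obl_arith2 {μ X Y : ℝ} (h0 : 0 < μ) (h1 : μ < 1) (hX : 1 < X)
    (heq : (1 - μ) * X + μ * Y = 1) : Y < 1 := by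
  by_contra h
  push_neg at h
  nlinarith [mul_pos (show (0:ℝ) < 1 - μ by linarith) (show (0:ℝ) < X - 1 by linarith),
    mul_nonneg h0.le (show (0:ℝ) ≤ Y - 1 by linarith)]

/-- Guarantees of the bisection step in the feasibility oracle: with
`π_s(μ) = ⟨s, c((1-μ)s + μq)⟩` and `π_q(μ) = ⟨q, c((1-μ)s + μq)⟩`,
(i) `(1-μ)π_s(μ) + μπ_q(μ) = 1`; (ii) there is `μ* ∈ (0,1)` with
`π_s(μ*) ∈ (1, (1+ωδ)/(1+δ))`, and the corresponding output point
`o = c((1-μ*)s + μ*q)` satisfies `⟨q, o⟩ < 1` and `⟨(1+δ)s, o⟩ < 1+ωδ`;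
(iii) the set of valid `μ` contains an interval of the stated length. -/
theorem oracle_bisection_lemma {n : ℕ}
    (s q : Fin n → ℝ) (hs : ∀ i, 0 < s i) (hq : ∀ i, 0 < q i)
    (δ ω : ℝ) (hδ : 0 < δ) (hω1 : 1 < ω) (hω2 : ω ≤ 2)
    (hsq : (1 + ω * δ) / (1 + δ) < ∑ i, s i * (1 / ((n : ℝ) * q i)))
    (hqs : 1 < ∑ i, q i * (1 / ((n : ℝ) * s i))) :
    (∀ μ ∈ Set.Ioo (0 : ℝ) 1,
        (1 - μ) * (∑ i, s i * (1 / ((n : ℝ) * ((1 - μ) * s i + μ * q i))))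
          + μ * (∑ i, q i * (1 / ((n : ℝ) * ((1 - μ) * s i + μ * q i)))) = 1) ∧
    (∃ μ ∈ Set.Ioo (0 : ℝ) 1,
        (∑ i, s i * (1 / ((n : ℝ) * ((1 - μ) * s i + μ * q i)))) ∈
          Set.Ioo 1 ((1 + ω * δ) / (1 + δ)) ∧
        (∑ i, q i * (1 / ((n : ℝ) * ((1 - μ) * s i + μ * q i)))) < 1 ∧
        (1 + δ) * (∑ i, s i * (1 / ((n : ℝ) * ((1 - μ) * s i + μ * q i)))) < 1 + ω * δ) ∧
    (∃ a b : ℝ,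
        ((1 + ω * δ) / (1 + δ) - 1) / ((n : ℝ) * ((1 + ω * δ) / (1 + δ)) ^ 2) ≤ b - a ∧
        Set.Ioo a b ⊆ {μ : ℝ | μ ∈ Set.Ioo (0 : ℝ) 1 ∧
          (∑ i, s i * (1 / ((n : ℝ) * ((1 - μ) * s i + μ * q i)))) ∈
            Set.Ioo 1 ((1 + ω * δ) / (1 + δ))}) := by
  have hδ1 : (0 : ℝ) < 1 + δ := by linarith
  set K : ℝ := (1 + ω * δ) / (1 + δ) with hKdef
  have hK1 : 1 < K := by rw [hKdef, lt_div_iff₀ hδ1]; nlinarith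
  have hK0 : 0 < K := lt_trans one_pos hK1
  -- n is positive
  have hn : 0 < n := by
    rcases Nat.eq_zero_or_pos n with h | h
    · exfalso; subst h; simp at hsq; linarith
    · exact h
  have hn' : (0 : ℝ) < n := by exact_mod_cast hn
  -- π(1) > K
  have hP1 : K < ∑ i, s i * (1 / ((n : ℝ) * ((1 - 1) * s i + 1 * q i))) := by
    have : ∀ i, s i * (1 / ((n : ℝ) * ((1 - 1) * s i + 1 * q i)))
        = s i * (1 / ((n : ℝ) * q i)) := by intro i; norm_num
    rw [Finset.sum_congr rfl fun i _ => this i]; exact hsq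
  -- Part (i)
  have hpart1 : ∀ μ ∈ Set.Ioo (0 : ℝ) 1,
      (1 - μ) * (∑ i, s i * (1 / ((n : ℝ) * ((1 - μ) * s i + μ * q i))))
        + μ * (∑ i, q i * (1 / ((n : ℝ) * ((1 - μ) * s i + μ * q i)))) = 1 := by
    intro μ hμ
    obtain ⟨hμ0, hμ1⟩ := hμ
    have hterm : ∀ i, (1 - μ) * (s i * (1 / ((n : ℝ) * ((1 - μ) * s i + μ * q i))))
        + μ * (q i * (1 / ((n : ℝ) * ((1 - μ) * s i + μ * q i)))) = 1 / n := by
      intro i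
      have hd := (obl_pos s q hs hq hμ0.le hμ1.le i).ne'
      field_simp
    calc (1 - μ) * (∑ i, s i * (1 / ((n : ℝ) * ((1 - μ) * s i + μ * q i))))
          + μ * (∑ i, q i * (1 / ((n : ℝ) * ((1 - μ) * s i + μ * q i))))
        = ∑ i, ((1 - μ) * (s i * (1 / ((n : ℝ) * ((1 - μ) * s i + μ * q i))))
            + μ * (q i * (1 / ((n : ℝ) * ((1 - μ) * s i + μ * q i))))) := by
          rw [Finset.mul_sum, Finset.mul_sum, ← Finset.sum_add_distrib]
      _ = ∑ _i : Fin n, (1 / (n : ℝ)) := Finset.sum_congr rfl fun i _ => hterm i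
      _ = 1 := by
          rw [Finset.sum_const, Finset.card_univ, Fintype.card_fin, nsmul_eq_mul]
          field_simp
  -- the sup construction
  set A : Set ℝ := {μ : ℝ | μ ∈ Set.Icc (0 : ℝ) 1 ∧
      (∑ i, s i * (1 / ((n : ℝ) * ((1 - μ) * s i + μ * q i)))) ≤ 1} with hAdef
  have hA0 : (0 : ℝ) ∈ A := ⟨⟨le_refl 0, zero_le_one⟩, le_of_eq (obl_P0 s q hs hn)⟩
  have hAne : A.Nonempty := ⟨0, hA0⟩
  have hAbdd : BddAbove A := ⟨1, fun μ hμ => hμ.1.2⟩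
  set a : ℝ := sSup A with hadef
  have ha0 : 0 ≤ a := le_csSup hAbdd hA0
  -- elements of A are bounded away from 1
  have haub : ∀ μ₀ ∈ A, μ₀ ≤ 1 - (K - 1) / ((n : ℝ) * K) := by
    intro μ₀ hμ₀
    obtain ⟨⟨h0, h1⟩, hle⟩ := hμ₀
    have hkey := obl_key s q hs hq h0 h1 (le_refl 1)
    have hP1pos : 0 < ∑ i, s i * (1 / ((n : ℝ) * ((1 - 1) * s i + 1 * q i))) :=
      lt_trans hK0 hP1
    have hP0pos : 0 ≤ ∑ i, s i * (1 / ((n : ℝ) * ((1 - μ₀) * s i + μ₀ * q i))) :=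
      (obl_sum_pos s q hs hq hn h0 h1).le
    set P1 := ∑ i, s i * (1 / ((n : ℝ) * ((1 - 1) * s i + 1 * q i)))
    set P0 := ∑ i, s i * (1 / ((n : ℝ) * ((1 - μ₀) * s i + μ₀ * q i)))
    -- hkey : P1 ≤ P0 + (1 - μ₀) * n * P0 * P1
    have h2 : P1 ≤ 1 + (1 - μ₀) * (n : ℝ) * P1 := by
      nlinarith [mul_nonneg (mul_nonneg (by linarith : (0:ℝ) ≤ 1 - μ₀) hn'.le) hP1pos.le]
    have h3 : (K - 1) / ((n : ℝ) * K) ≤ 1 - μ₀ := by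
      rw [div_le_iff₀ (by positivity)]
      nlinarith [mul_le_mul_of_nonneg_left h2 hK0.le,
        mul_nonneg (mul_nonneg (by linarith : (0:ℝ) ≤ 1 - μ₀) hn'.le) (by linarith : (0:ℝ) ≤ P1 - K)]
    linarith
  have ha1 : a ≤ 1 - (K - 1) / ((n : ℝ) * K) := csSup_le hAne haub
  set L : ℝ := (K - 1) / ((n : ℝ) * K ^ 2) with hLdef
  have hL : 0 < L := by
    rw [hLdef]; exact div_pos (by linarith) (by positivity)
  have hLlt : L ≤ (K - 1) / ((n : ℝ) * K) := by
    rw [hLdef]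
    gcongr
    · nlinarith
  have hb1 : a + L ≤ 1 := by linarith
  -- main claim
  have hmem : ∀ μ ∈ Set.Ioo a (a + L), μ ∈ Set.Ioo (0 : ℝ) 1 ∧
      (∑ i, s i * (1 / ((n : ℝ) * ((1 - μ) * s i + μ * q i)))) ∈ Set.Ioo 1 K := by
    intro μ hμ
    obtain ⟨hμa, hμb⟩ := hμ
    have hμ0 : 0 < μ := lt_of_le_of_lt ha0 hμa
    have hμ1 : μ < 1 := lt_of_lt_of_le hμb hb1
    have hPgt1 : 1 < ∑ i, s i * (1 / ((n : ℝ) * ((1 - μ) * s i + μ * q i))) := by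
      by_contra h
      push_neg at h
      have : μ ∈ A := ⟨⟨hμ0.le, hμ1.le⟩, h⟩
      exact absurd (le_csSup hAbdd this) (not_le.2 hμa)
    refine ⟨⟨hμ0, hμ1⟩, hPgt1, ?_⟩
    -- get μ₀ ∈ A close to a
    obtain ⟨μ₀, hμ₀A, hμ₀gt⟩ := exists_lt_of_lt_csSup hAne (show μ - L < a by linarith)
    have hμ₀le : μ₀ ≤ μ := le_of_lt (lt_of_le_of_lt (le_csSup hAbdd hμ₀A) hμa)
    have hkey := obl_key s q hs hq hμ₀A.1.1 hμ₀le hμ1.le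
    have hPpos : 0 < ∑ i, s i * (1 / ((n : ℝ) * ((1 - μ) * s i + μ * q i))) := by linarith
    exact obl_arith hn' hK1 hLdef hkey hμ₀A.2 hPpos (by linarith) (by linarith)
  refine ⟨hpart1, ?_, ⟨a, a + L, by linarith, fun μ hμ => hmem μ hμ⟩⟩
  -- part (ii)
  have hmid : a + L / 2 ∈ Set.Ioo a (a + L) := ⟨by linarith, by linarith⟩
  obtain ⟨hμIoo, hPgt1, hPltK⟩ := hmem _ hmid
  have heq := hpart1 _ hμIoo
  obtain ⟨hμ0, hμ1⟩ := hμIoo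
  set X : ℝ := ∑ i, s i * (1 / ((n : ℝ) * ((1 - (a + L / 2)) * s i + (a + L / 2) * q i))) with hXdef
  set Y : ℝ := ∑ i, q i * (1 / ((n : ℝ) * ((1 - (a + L / 2)) * s i + (a + L / 2) * q i))) with hYdef
  refine ⟨a + L / 2, ⟨hμ0, hμ1⟩, ⟨hPgt1, hPltK⟩, ?_, ?_⟩
  · exact obl_arith2 hμ0 hμ1 hPgt1 heq
  · have h6 := hPltK
    rw [hKdef, lt_div_iff₀ hδ1] at h6
    linarith
end

section
/- Let A be a nonnegative m×n matrix with all entries A_{ij} ≤ 1, let δ > 0 and ω ∈ (1,2], let s ∈ ℝ_{>0}^n, set v = c(s)/(1+δ), and assume A v ≤ 1_m. Let U ∈ ℝ^n be given by U_i = (1 + √(ωδn) + ωδn)·v_i. Then for every o ∈ L_{ωδ}(v) and every row A_i of A: (i) ⟨A_i, o⟩ ≤ 1 + min( √(ωδn) + ωδn, ((1+ωδ)/(1+δ))·max_{j∈[n]}(1/s_j) − 1 ); (ii) if ⟨A_i, U⟩ ≥ 1 then ⟨A_i, o⟩ ≥ 1 − min(1, 3√(ωδn)); (iii) if ⟨A_i,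 U⟩ < 1 then ⟨A_i, o⟩ ≤ 1. -/
/-!
Write `t_j = o_j / v_j`. The two lens inequalities say `∑ t_j ≤ n (1 + ωδ)` and `∑ 1/t_j ≤ n`,
so the nonnegative terms `t_j + 1/t_j - 2` sum to at most `ωδn`; each of `t_j` and `1/t_j` is
then at most `K = 1 + √(ωδn) + ωδn`. Thus `o ≤ K v = U` coordinatewise, which gives the first
bound of (i) and (iii) from `A v ≤ 1`, and `o ≥ v / K`, which gives `A_i o ≥ 1/K² ≥ 1 - 3√(ωδn)`
as soon as `A_i U = K A_i v ≥ 1`. The second bound of (i) follows from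
`o_j ≤ (max_k n v_k) · o_j / (n v_j)` and `n v_k = 1 / ((1 + δ) s_k)`.
-/

open Finset

lemma le_one_add_sqrt_add_of_add_inv_le {t c : ℝ} (ht : 0 < t) (hc : 0 ≤ c)
    (h : t + t⁻¹ ≤ 2 + c) : t ≤ 1 + √c + c := by
  set r := √c
  have hr : 0 ≤ r := Real.sqrt_nonneg c
  have hcr : c = r ^ 2 := (Real.sq_sqrt hc).symm
  have hquad : t ^ 2 - (2 + c) * t + 1 ≤ 0 := by
    have := mul_le_mul_of_nonneg_right h ht.le
    rw [add_mul, inv_mul_cancel₀ ht.ne'] at this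
    nlinarith
  -- t² - (2 + r²) t + 1 = (t - (1 + r + r²)) (t - (1 - r)) + r³
  by_contra! hbig
  rw [hcr] at hbig hquad
  nlinarith [mul_pos (sub_pos.2 hbig) (show 0 < t - (1 - r) by nlinarith), pow_nonneg hr 3]

lemma one_sub_min_le_of_inv_sq_le {r x : ℝ} (hr : 0 ≤ r) (hx : 0 ≤ x)
    (h : ((1 + r + r ^ 2) ^ 2)⁻¹ ≤ x) : 1 - min 1 (3 * r) ≤ x := by
  have hexpand : (1 - 3 * r) * (1 + r + r ^ 2) ^ 2
      = 1 - (r + 3 * r ^ 2 + 7 * r ^ 3 + 5 * r ^ 4 + 3 * r ^ 5) := by ring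
  have h3 : 1 - 3 * r ≤ ((1 + r + r ^ 2) ^ 2)⁻¹ := by
    rw [← one_div, le_div_iff₀ (by positivity), hexpand]
    exact sub_le_self _ (by positivity)
  rw [sub_le_comm]
  exact le_min (by linarith) (by linarith)

section

variable {ι : Type*} [Fintype ι]

noncomputable def centroidMap (h : ι → ℝ) (j : ι) : ℝ := 1 / (Fintype.card ι * h j)

def lens (δ' : ℝ) (v : ι → ℝ) : Set (ι → ℝ) :=
  {x | (∀ j, 0 < x j) ∧ ∑ j, centroidMap x j * v j ≤ 1 ∧ ∑ j, centroidMap v j * x j ≤ 1 + δ'}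

lemma add_inv_le_of_sum_le {t : ι → ℝ} (ht : ∀ j, 0 < t j) {ε : ℝ}
    (hsum : ∑ j, t j ≤ Fintype.card ι * (1 + ε)) (hsum_inv : ∑ j, (t j)⁻¹ ≤ Fintype.card ι)
    (j : ι) : t j + (t j)⁻¹ ≤ 2 + ε * Fintype.card ι := by
  have hnonneg : ∀ k, 0 ≤ t k + (t k)⁻¹ - 2 := fun k => by
    have hk := ht k
    have : t k + (t k)⁻¹ - 2 = (t k - 1) ^ 2 / t k := by field_simp; ring
    rw [this]; positivity
  have := single_le_sum (fun k _ => hnonneg k) (mem_univ j)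
  simp only [sum_sub_distrib, sum_add_distrib, sum_const, card_univ, nsmul_eq_mul] at this
  linarith

lemma le_mul_and_le_mul_of_mem_lens {v o : ι → ℝ} (hv : ∀ j, 0 < v j) {ε : ℝ} (hε : 0 ≤ ε)
    (ho : o ∈ lens ε v) (j : ι) :
    o j ≤ (1 + √(ε * Fintype.card ι) + ε * Fintype.card ι) * v j ∧
      v j ≤ (1 + √(ε * Fintype.card ι) + ε * Fintype.card ι) * o j := by
  obtain ⟨ho_pos, hov, hvo⟩ := ho
  set N : ℝ := (Fintype.card ι : ℝ) with hN_def
  have hN : 0 < N := Nat.cast_pos.2 (Fintype.card_pos_iff.2 ⟨j⟩)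
  set t : ι → ℝ := fun k => o k / v k
  have ht : ∀ k, 0 < t k := fun k => div_pos (ho_pos k) (hv k)
  have hsum : ∑ k, t k ≤ N * (1 + ε) := by
    have : ∑ k, centroidMap v k * o k = (∑ k, t k) / N := by
      rw [sum_div]; refine sum_congr rfl fun k _ => ?_
      simp only [centroidMap, t, ← hN_def]; field_simp
    rwa [this, div_le_iff₀ hN, mul_comm] at hvo
  have hsum_inv : ∑ k, (t k)⁻¹ ≤ N := by
    have : ∑ k, centroidMap o k * v k = (∑ k, (t k)⁻¹) / N := by
      rw [sum_div]; refine sum_congr rfl fun k _ => ?_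
      simp only [centroidMap, t, inv_div, ← hN_def]; field_simp
    rwa [this, div_le_one hN] at hov
  have hpair := add_inv_le_of_sum_le ht hsum hsum_inv j
  have hεN : 0 ≤ ε * N := mul_nonneg hε hN.le
  constructor
  · have := le_one_add_sqrt_add_of_add_inv_le (ht j) hεN hpair
    rwa [div_le_iff₀ (hv j)] at this
  · have := le_one_add_sqrt_add_of_add_inv_le (inv_pos.2 (ht j)) hεN
      (by rwa [inv_inv, add_comm])
    rwa [inv_div, div_le_iff₀ (ho_pos j)] at this

lemma sum_mul_le_iSup_mul {a w o : ι → ℝ} (ha : ∀ j, a j ≤ 1) (hw : ∀ j, 0 < w j)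
    (ho : ∀ j, 0 ≤ o j) {B : ℝ} (hB : ∑ j, 1 / w j * o j ≤ B) :
    ∑ j, a j * o j ≤ (⨆ j, w j) * B := by
  have hsup_nonneg : 0 ≤ ⨆ j, w j := Real.iSup_nonneg fun j => (hw j).le
  have hterm : ∀ j, a j * o j ≤ (⨆ j, w j) * (1 / w j * o j) := fun j =>
    calc a j * o j ≤ o j := mul_le_of_le_one_left (ho j) (ha j)
      _ = w j * (1 / w j * o j) := by rw [← mul_assoc, mul_one_div_cancel (hw j).ne', one_mul]
      _ ≤ (⨆ j, w j) * (1 / w j * o j) :=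
        mul_le_mul_of_nonneg_right (le_ciSup (Set.finite_range w).bddAbove j)
          (mul_nonneg (one_div_pos.2 (hw j)).le (ho j))
  calc ∑ j, a j * o j ≤ ∑ j, (⨆ j, w j) * (1 / w j * o j) := sum_le_sum fun j _ => hterm j
    _ = (⨆ j, w j) * ∑ j, 1 / w j * o j := (mul_sum ..).symm
    _ ≤ (⨆ j, w j) * B := mul_le_mul_of_nonneg_left hB hsup_nonneg

lemma inv_sq_le_sum_mul_of_one_le {a v o : ι → ℝ} {K : ℝ} (hK : 0 < K) (ha : ∀ j, 0 ≤ a j)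
    (hvo : ∀ j, v j ≤ K * o j) (h : 1 ≤ K * ∑ j, a j * v j) : (K ^ 2)⁻¹ ≤ ∑ j, a j * o j := by
  calc (K ^ 2)⁻¹ = 1 / K / K := by rw [div_div, one_div, sq]
    _ ≤ (∑ j, a j * v j) / K := by gcongr; rwa [div_le_iff₀ hK, mul_comm]
    _ = ∑ j, a j * (v j / K) := by rw [sum_div]; exact sum_congr rfl fun j _ => by ring
    _ ≤ ∑ j, a j * o j := sum_le_sum fun j _ =>
        mul_le_mul_of_nonneg_left (by rw [div_le_iff₀ hK, mul_comm]; exact hvo j) (ha j)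

end

theorem oracle_width_guarantees_general {m n : ℕ}
    (A : Matrix (Fin m) (Fin n) ℝ)
    (hA0 : ∀ i j, 0 ≤ A i j) (hA1 : ∀ i j, A i j ≤ 1)
    (δ ω : ℝ) (hδ : 0 < δ) (hω1 : 1 < ω)
    (s : Fin n → ℝ) (hs : ∀ j, 0 < s j)
    (v : Fin n → ℝ) (hv : ∀ j, v j = (1 / ((n : ℝ) * s j)) / (1 + δ))
    (hAv : ∀ i, ∑ j, A i j * v j ≤ 1)
    (U : Fin n → ℝ) (hU : ∀ j, U j = (1 + Real.sqrt (ω * δ * n) + ω * δ * n) * v j)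
    (o : Fin n → ℝ) (ho_pos : ∀ j, 0 < o j)
    (ho1 : ∑ j, (1 / ((n : ℝ) * o j)) * v j ≤ 1)
    (ho2 : ∑ j, (1 / ((n : ℝ) * v j)) * o j ≤ 1 + ω * δ) :
    ∀ i,
      (∑ j, A i j * o j ≤ 1 + min (Real.sqrt (ω * δ * n) + ω * δ * n)
          ((1 + ω * δ) / (1 + δ) * (⨆ j, 1 / s j) - 1)) ∧
      (1 ≤ ∑ j, A i j * U j → 1 - min 1 (3 * Real.sqrt (ω * δ * n)) ≤ ∑ j, A i j * o j) ∧
      (∑ j, A i j * U j < 1 → ∑ j, A i j * o j ≤ 1) := by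
  intro i
  have hnv : ∀ j, (n : ℝ) * v j = 1 / s j * (1 + δ)⁻¹ := fun j => by
    have : (n : ℝ) ≠ 0 := Nat.cast_ne_zero.2 (Fin.pos j).ne'
    rw [hv j]; field_simp
  have hv_pos : ∀ j, 0 < v j := fun j => by rw [hv j]; have := Fin.pos j; have := hs j; positivity
  have hnv_pos : ∀ j, 0 < (n : ℝ) * v j := fun j => mul_pos (Nat.cast_pos.2 (Fin.pos j)) (hv_pos j)
  have ho : o ∈ lens (ω * δ) v := by
    refine ⟨ho_pos, ?_, ?_⟩ <;> simpa only [centroidMap, Fintype.card_fin]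
  set K := 1 + √(ω * δ * n) + ω * δ * n
  have hK : 0 < K := by positivity
  have hbounds : ∀ j, o j ≤ K * v j ∧ v j ≤ K * o j := by
    simpa only [Fintype.card_fin] using le_mul_and_le_mul_of_mem_lens hv_pos (by positivity) ho
  have hAU : ∑ j, A i j * U j = K * ∑ j, A i j * v j := by
    rw [mul_sum]; exact sum_congr rfl fun j _ => by rw [hU j]; ring
  have hAo_le : ∑ j, A i j * o j ≤ ∑ j, A i j * U j :=
    sum_le_sum fun j _ => by rw [hU j]; exact mul_le_mul_of_nonneg_left (hbounds j).1 (hA0 i j)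
  refine ⟨?_, fun h => ?_, fun h => (hAo_le.trans_lt h).le⟩
  · have hsup : ⨆ j, (n : ℝ) * v j = (⨆ j, 1 / s j) * (1 + δ)⁻¹ := by
      simp_rw [hnv]; exact (Real.iSup_mul_of_nonneg (by positivity) _).symm
    rw [← min_add_add_left]
    refine le_min ?_ ?_
    · calc ∑ j, A i j * o j ≤ K * ∑ j, A i j * v j := hAU ▸ hAo_le
        _ ≤ K := mul_le_of_le_one_right hK.le (hAv i)
        _ = _ := add_assoc _ _ _
    · refine (sum_mul_le_iSup_mul (hA1 i) hnv_pos (fun j => (ho_pos j).le) ho2).trans_eq ?_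
      rw [hsup]; ring
  · have hK_sq : K = 1 + √(ω * δ * n) + √(ω * δ * n) ^ 2 := by
      rw [Real.sq_sqrt (by positivity)]
    refine one_sub_min_le_of_inv_sq_le (Real.sqrt_nonneg _)
      (sum_nonneg fun j _ => mul_nonneg (hA0 i j) (ho_pos j).le) ?_
    rw [← hK_sq]
    exact inv_sq_le_sum_mul_of_one_le hK (hA0 i) (fun j => (hbounds j).2) (hAU ▸ h)

/-- Width guarantees of the feasibility oracle: any point `o` in the lens
`L_{ωδ}(v)`, where `v = c(s)/(1+δ) ∈ P`, satisfies (i) the upper width bound,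
(ii) the lower width bound for non-redundant constraints (those covering the
upper vertex `U` of the bounding box), and (iii) all redundant constraints. -/
theorem oracle_width_guarantees {m n : ℕ} (hn : 0 < n)
    (A : Matrix (Fin m) (Fin n) ℝ)
    (hA0 : ∀ i j, 0 ≤ A i j) (hA1 : ∀ i j, A i j ≤ 1)
    (δ ω : ℝ) (hδ : 0 < δ) (hω1 : 1 < ω) (hω2 : ω ≤ 2)
    (s : Fin n → ℝ) (hs : ∀ j, 0 < s j)
    (v : Fin n → ℝ) (hv : ∀ j, v j = (1 / ((n : ℝ) * s j)) / (1 + δ))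
    (hAv : ∀ i, ∑ j, A i j * v j ≤ 1)
    (U : Fin n → ℝ) (hU : ∀ j, U j = (1 + Real.sqrt (ω * δ * n) + ω * δ * n) * v j)
    (o : Fin n → ℝ) (ho_pos : ∀ j, 0 < o j)
    (ho1 : ∑ j, (1 / ((n : ℝ) * o j)) * v j ≤ 1)
    (ho2 : ∑ j, (1 / ((n : ℝ) * v j)) * o j ≤ 1 + ω * δ) :
    ∀ i,
      (∑ j, A i j * o j ≤ 1 + min (Real.sqrt (ω * δ * n) + ω * δ * n)
          ((1 + ω * δ) / (1 + δ) * (⨆ j, 1 / s j) - 1)) ∧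
      (1 ≤ ∑ j, A i j * U j → 1 - min 1 (3 * Real.sqrt (ω * δ * n)) ≤ ∑ j, A i j * o j) ∧
      (∑ j, A i j * U j < 1 → ∑ j, A i j * o j ≤ 1) :=
  oracle_width_guarantees_general A hA0 hA1 δ ω hδ hω1 s hs v hv hAv U hU o ho_pos ho1 ho2
end
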